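/- arXiv:1108.2233 — 8 statements merged into one kernel-verified Lean document; each statement's English description precedes it below -/
import Mathlib

section
/- Let n ≥ 1 and let U ∈ M_{2n}(ℂ) be a unitary matrix that is antisymmetric (Uᵀ = −U). Then the Breuer–Hall map φ_U : M_{2n}(ℂ) → M_{2n}(ℂ) defined by φ_U(X) = (Tr X)·I_{2n} − X − U Xᵀ U* is a positive map: for every positive semidefinite X ∈ M_{2n}(ℂ), the matrix φ_U(X) is positive semidefinite. -/
open Matrix
open scoped ComplexOrder Kronecker

-- Bessel for two orthogonal equal-norm vectors
lemma bessel2 {m : Type*} [Fintype m] (v y w : m → ℂ)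
    (hvy : star v ⬝ᵥ y = 0) (hyy : star y ⬝ᵥ y = star v ⬝ᵥ v) :
    star (star w ⬝ᵥ v) * (star w ⬝ᵥ v) + star (star w ⬝ᵥ y) * (star w ⬝ᵥ y)
      ≤ (star v ⬝ᵥ v) * (star w ⬝ᵥ w) := by
  set c : ℂ := star v ⬝ᵥ v with hc
  set a : ℂ := star v ⬝ᵥ w with ha
  set b : ℂ := star y ⬝ᵥ w with hb
  have hwv : star w ⬝ᵥ v = star a := by
    rw [ha, ← star_dotProduct]
  have hwy : star w ⬝ᵥ y = star b := by
    rw [hb, ← star_dotProduct]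
  have hyv : star y ⬝ᵥ v = 0 := by
    have := congrArg star hvy
    rwa [star_dotProduct, star_star, star_zero] at this
  rw [hwv, hwy, star_star, star_star]
  by_cases hc0 : c = 0
  · have hv0 : v = 0 := dotProduct_star_self_eq_zero.mp (hc ▸ hc0)
    have hy0 : y = 0 := dotProduct_star_self_eq_zero.mp (by rw [hyy]; exact hc0)
    simp [ha, hb, hv0, hy0, hc0]
  · set u : m → ℂ := c • w - a • v - b • y with hu
    have h0 : 0 ≤ star u ⬝ᵥ u := dotProduct_star_self_nonneg u
    have hexp : star u ⬝ᵥ u = c * (c * (star w ⬝ᵥ w) - a * star a - b * star b) := by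
      have hstar_c : star c = c := by rw [hc, ← star_dotProduct]
      simp only [hu, star_sub, star_smul, sub_dotProduct, dotProduct_sub,
        smul_dotProduct, dotProduct_smul, smul_eq_mul]
      rw [hstar_c]
      rw [← hc, ← ha, ← hb, hwv, hwy, hvy, hyv, hyy]
      ring
    rw [hexp] at h0
    have hcnn : 0 ≤ c := hc ▸ dotProduct_star_self_nonneg v
    have hcim : c.im = 0 := by
      have := (Complex.le_def.mp hcnn).2; simpa using this.symm
    have hcre : 0 < c.re := by
      rcases lt_or_eq_of_le (Complex.le_def.mp hcnn).1 with h | h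
      · simpa using h
      · exact absurd (Complex.ext (by simpa using h.symm) hcim) hc0
    set Z : ℂ := c * (star w ⬝ᵥ w) - a * star a - b * star b with hZ
    have h0' := Complex.le_def.mp h0
    have him : Z.im = 0 := by
      have : (c * Z).im = 0 := by simpa using h0'.2.symm
      rw [Complex.mul_im, hcim] at this
      simpa [hcre.ne'] using this
    have hre : 0 ≤ Z.re := by
      have : 0 ≤ (c * Z).re := by simpa using h0'.1
      rw [Complex.mul_re, hcim] at this
      simp at this
      nlinarith
    rw [← sub_nonneg]
    have : c * (star w ⬝ᵥ w) - (a * star a + b * star b) = Z := by rw [hZ]; ring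
    rw [this]
    exact Complex.le_def.mpr ⟨by simpa using hre, by simp [him]⟩


/-- The Breuer–Hall map `φ_U(X) = (Tr X)·I − X − U Xᵀ U*`, for `U ∈ M_{2n}(ℂ)`
unitary and antisymmetric, is a positive map. -/
theorem breuerHall_positive (n : ℕ) (hn : 1 ≤ n)
    (U : Matrix (Fin (2 * n)) (Fin (2 * n)) ℂ)
    (hU : U * Uᴴ = 1) (hanti : Uᵀ = -U) :
    ∀ X : Matrix (Fin (2 * n)) (Fin (2 * n)) ℂ, X.PosSemidef →
      (X.trace • (1 : Matrix (Fin (2 * n)) (Fin (2 * n)) ℂ) - X - U * Xᵀ * Uᴴ).PosSemidef := by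
  intro X hX
  have hXh : X.IsHermitian := hX.1
  obtain ⟨B, hB⟩ : ∃ B : Matrix (Fin (2 * n)) (Fin (2 * n)) ℂ, X = Bᴴ * B := by
    open scoped MatrixOrder in
    obtain ⟨B, hB⟩ := CStarAlgebra.nonneg_iff_eq_star_mul_self.mp hX.nonneg
    exact ⟨B, hB⟩
  rw [posSemidef_iff_dotProduct_mulVec]
  constructor
  · -- Hermitian
    have h1 : star X.trace = X.trace := by
      conv_lhs => rw [← hXh, trace_conjTranspose, star_star]
    have hXt : (Xᵀ)ᴴ = Xᵀ := by
      ext i j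
      simp only [conjTranspose_apply, transpose_apply]
      exact hXh.apply j i
    show (X.trace • 1 - X - U * Xᵀ * Uᴴ)ᴴ = _
    rw [conjTranspose_sub, conjTranspose_sub, conjTranspose_smul,
      conjTranspose_one, conjTranspose_mul, conjTranspose_mul,
      conjTranspose_conjTranspose, hXt, hXh, h1, Matrix.mul_assoc]
  · intro v
    set y : Fin (2 * n) → ℂ := star (Uᴴ *ᵥ v) with hy
    have hy2 : y = Uᵀ *ᵥ star v := by
      rw [hy, star_mulVec, conjTranspose_conjTranspose, ← vecMul_transpose,
        transpose_transpose]
    have orth : star v ⬝ᵥ y = 0 := by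
      rw [hy2]
      have h1 : star v ⬝ᵥ (Uᵀ *ᵥ star v) = star v ⬝ᵥ (U *ᵥ star v) := by
        rw [dotProduct_mulVec, vecMul_transpose, dotProduct_comm]
      have h2 : star v ⬝ᵥ (Uᵀ *ᵥ star v) = -(star v ⬝ᵥ (U *ᵥ star v)) := by
        rw [hanti, neg_mulVec, dotProduct_neg]
      linear_combination (h1 + h2) / 2
    have normeq : star y ⬝ᵥ y = star v ⬝ᵥ v := by
      rw [hy, star_star, dotProduct_comm, star_mulVec,
        conjTranspose_conjTranspose, ← dotProduct_mulVec, mulVec_mulVec, hU,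
        one_mulVec]
    have hUterm : star v ⬝ᵥ ((U * Xᵀ * Uᴴ) *ᵥ v) = star y ⬝ᵥ (X *ᵥ y) := by
      have hsz : star v ᵥ* U = star (Uᴴ *ᵥ v) := by
        rw [star_mulVec, conjTranspose_conjTranspose]
      rw [← mulVec_mulVec, ← mulVec_mulVec, dotProduct_mulVec, hsz]
      rw [hy, star_star]
      rw [dotProduct_mulVec, vecMul_transpose, dotProduct_comm]
    have hQ : ∀ w : Fin (2 * n) → ℂ,
        star w ⬝ᵥ (X *ᵥ w) = star (B *ᵥ w) ⬝ᵥ (B *ᵥ w) := by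
      intro w
      rw [hB, ← mulVec_mulVec, dotProduct_mulVec, ← star_mulVec]
    have htr : X.trace = ∑ k, star (B k) ⬝ᵥ (B k) := by
      rw [hB]
      simp only [trace, diag_apply, mul_apply, conjTranspose_apply, dotProduct,
        Pi.star_apply]
      exact Finset.sum_comm
    -- rewrite the quadratic form
    have hform : star v ⬝ᵥ ((X.trace • (1 : Matrix (Fin (2 * n)) (Fin (2 * n)) ℂ)
        - X - U * Xᵀ * Uᴴ) *ᵥ v)
        = ∑ k, ((star (B k) ⬝ᵥ (B k)) * (star v ⬝ᵥ v)
            - star ((B *ᵥ v) k) * ((B *ᵥ v) k)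
            - star ((B *ᵥ y) k) * ((B *ᵥ y) k)) := by
      rw [sub_mulVec, sub_mulVec, dotProduct_sub, dotProduct_sub,
        smul_mulVec, one_mulVec, dotProduct_smul, hUterm, hQ, hQ, htr,
        smul_eq_mul]
      rw [Finset.sum_mul]
      simp only [Finset.sum_sub_distrib]
      have hdp : ∀ w : Fin (2 * n) → ℂ, star w ⬝ᵥ w = ∑ k, star (w k) * w k := by
        intro w; simp [dotProduct]
      rw [hdp (B *ᵥ v), hdp (B *ᵥ y)]
    rw [hform]
    apply Finset.sum_nonneg
    intro k _
    have hb := bessel2 v y (star (B k)) orth normeq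
    rw [star_star] at hb
    have h1 : (B *ᵥ v) k = B k ⬝ᵥ v := rfl
    have h2 : (B *ᵥ y) k = B k ⬝ᵥ y := rfl
    rw [h1, h2, sub_sub, sub_nonneg]
    calc star (B k ⬝ᵥ v) * (B k ⬝ᵥ v) + star (B k ⬝ᵥ y) * (B k ⬝ᵥ y)
        ≤ (star v ⬝ᵥ v) * (B k ⬝ᵥ star (B k)) := hb
      _ = star (B k) ⬝ᵥ B k * (star v ⬝ᵥ v) := by
          rw [dotProduct_comm (B k) (star (B k)), mul_comm]
end

section
/- Let U ∈ M_{2n}(ℂ) be unitary and antisymmetric (Uᵀ = −U), and let x ∈ ℂ^{2n} be a unit vector. Then: (i) ⟨x, U x̄⟩ = 0 and ‖U x̄‖ = 1, so the rank-one projections x x* and (U x̄)(U x̄)* are mutually orthogonal; (ii) φ_U(x x*) = I_{2n} − x x* − (U x̄)(U x̄)*, and this matrix is the orthogonal projection onto the orthogonal complement of the span of {x, U x̄}. -/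
open Matrix
open scoped ComplexOrder Kronecker

section Aux
variable {m : Type*} [Fintype m] [DecidableEq m]

lemma aux_vmv_mul_vmv (a b c d : m → ℂ) :
    vecMulVec a b * vecMulVec c d = (b ⬝ᵥ c) • vecMulVec a d := by
  ext i j
  simp only [mul_apply, vecMulVec_apply, Matrix.smul_apply, smul_eq_mul, dotProduct,
    Finset.sum_mul]
  exact Finset.sum_congr rfl fun k _ => by ring

lemma aux_vmv_transpose (a b : m → ℂ) : (vecMulVec a b)ᵀ = vecMulVec b a := by
  ext i j; simp [vecMulVec_apply, mul_comm]

lemma aux_mul_vmv (A : Matrix m m ℂ) (a b : m → ℂ) :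
    A * vecMulVec a b = vecMulVec (A *ᵥ a) b := by
  ext i j
  simp [mul_apply, vecMulVec_apply, mulVec, dotProduct, Finset.sum_mul, mul_assoc]

lemma aux_vmv_mul (A : Matrix m m ℂ) (a b : m → ℂ) :
    vecMulVec a b * A = vecMulVec a (b ᵥ* A) := by
  ext i j
  simp [mul_apply, vecMulVec_apply, vecMul, dotProduct, Finset.mul_sum, mul_assoc]

lemma aux_vmv_mulVec (a b v : m → ℂ) :
    vecMulVec a b *ᵥ v = (b ⬝ᵥ v) • a := by
  ext i
  simp only [mulVec, vecMulVec_apply, dotProduct, Pi.smul_apply, smul_eq_mul,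
    Finset.sum_mul]
  exact Finset.sum_congr rfl fun k _ => by ring

lemma aux_vmv_trace (a b : m → ℂ) : (vecMulVec a b).trace = a ⬝ᵥ b := by
  simp [trace, vecMulVec_apply, dotProduct, diag]

lemma aux_vmv_conjTranspose (a : m → ℂ) :
    (vecMulVec a (star a))ᴴ = vecMulVec a (star a) := by
  ext i j; simp [conjTranspose_apply, vecMulVec_apply, mul_comm]

end Aux

/-- For `U ∈ M_{2n}(ℂ)` unitary and antisymmetric and a unit vector `x`:
(i) `⟨x, U x̄⟩ = 0`, `‖U x̄‖ = 1`, and the rank-one projections `x x*` and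
`(U x̄)(U x̄)*` are mutually orthogonal;
(ii) `φ_U(x x*) = I − x x* − (U x̄)(U x̄)*`, which is the orthogonal projection
onto the orthogonal complement of the span of `{x, U x̄}`. -/
theorem breuerHall_on_pure_state (n : ℕ) (hn : 1 ≤ n)
    (U : Matrix (Fin (2 * n)) (Fin (2 * n)) ℂ)
    (hU : U * Uᴴ = 1) (hanti : Uᵀ = -U)
    (x : Fin (2 * n) → ℂ) (hx : star x ⬝ᵥ x = 1)
    (u : Fin (2 * n) → ℂ) (hu : u = U.mulVec (star x))
    (P : Matrix (Fin (2 * n)) (Fin (2 * n)) ℂ)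
    (hP : P = 1 - vecMulVec x (star x) - vecMulVec u (star u)) :
    star x ⬝ᵥ u = 0 ∧
    star u ⬝ᵥ u = 1 ∧
    vecMulVec x (star x) * vecMulVec u (star u) = 0 ∧
    vecMulVec u (star u) * vecMulVec x (star x) = 0 ∧
    (vecMulVec x (star x)).trace • (1 : Matrix (Fin (2 * n)) (Fin (2 * n)) ℂ)
        - vecMulVec x (star x) - U * (vecMulVec x (star x))ᵀ * Uᴴ = P ∧
    P.IsHermitian ∧
    P * P = P ∧
    (∀ v : Fin (2 * n) → ℂ, P.mulVec v = v ↔ (star x ⬝ᵥ v = 0 ∧ star u ⬝ᵥ v = 0)) := by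
  have hU' : Uᴴ * U = 1 := mul_eq_one_comm.mp hU
  have hx' : x ⬝ᵥ star x = 1 := by rw [dotProduct_comm]; exact hx
  -- (i) orthogonality of x and u
  have h1 : star x ⬝ᵥ u = 0 := by
    have h : star x ⬝ᵥ u = -(star x ⬝ᵥ u) := by
      conv_lhs => rw [hu, dotProduct_mulVec, ← mulVec_transpose, hanti]
      rw [neg_mulVec, neg_dotProduct, dotProduct_comm, hu]
    have := eq_neg_iff_add_eq_zero.mp h
    exact add_self_eq_zero.mp this
  -- star u in closed form
  have hsu : star u = x ᵥ* Uᴴ := by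
    rw [hu, star_mulVec, star_star]
  have h2 : star u ⬝ᵥ u = 1 := by
    rw [hsu, hu, dotProduct_mulVec, vecMul_vecMul, hU', vecMul_one, hx']
  have h1' : star u ⬝ᵥ x = 0 := by
    have := congrArg star h1
    rwa [star_dotProduct, star_star, star_zero] at this
  set A := vecMulVec x (star x) with hA
  set B := vecMulVec u (star u) with hB
  have hAB : A * B = 0 := by
    rw [hA, hB, aux_vmv_mul_vmv, h1, zero_smul]
  have hBA : B * A = 0 := by
    rw [hA, hB, aux_vmv_mul_vmv, h1', zero_smul]
  have hAA : A * A = A := by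
    rw [hA, aux_vmv_mul_vmv, hx, one_smul]
  have hBB : B * B = B := by
    rw [hB, aux_vmv_mul_vmv, h2, one_smul]
  -- the Breuer-Hall image
  have hmap : A.trace • (1 : Matrix (Fin (2 * n)) (Fin (2 * n)) ℂ) - A - U * Aᵀ * Uᴴ = P := by
    have htr : A.trace = 1 := by rw [hA, aux_vmv_trace, hx']
    have himg : U * Aᵀ * Uᴴ = B := by
      rw [hA, aux_vmv_transpose, aux_mul_vmv, aux_vmv_mul, ← hu, ← hsu, hB]
    rw [htr, one_smul, himg, hP]
  refine ⟨h1, h2, hAB, hBA, hmap, ?_, ?_, ?_⟩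
  · -- Hermitian
    have hAH : Aᴴ = A := by rw [hA]; exact aux_vmv_conjTranspose x
    have hBH : Bᴴ = B := by rw [hB]; exact aux_vmv_conjTranspose u
    rw [Matrix.IsHermitian, hP, conjTranspose_sub, conjTranspose_sub, conjTranspose_one,
      hAH, hBH]
  · -- idempotent
    rw [hP]
    simp only [sub_mul, mul_sub, one_mul, mul_one, hAA, hBB, hAB, hBA]
    abel
  · -- range characterization
    intro v
    have hPv : P *ᵥ v = v - (star x ⬝ᵥ v) • x - (star u ⬝ᵥ v) • u := by
      rw [hP, sub_mulVec, sub_mulVec, one_mulVec, hA, hB,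
        aux_vmv_mulVec, aux_vmv_mulVec]
    constructor
    · intro hv
      rw [hPv, sub_sub, sub_eq_self] at hv
      have hxv : star x ⬝ᵥ ((star x ⬝ᵥ v) • x + (star u ⬝ᵥ v) • u) = star x ⬝ᵥ v := by
        rw [dotProduct_add, dotProduct_smul, dotProduct_smul, hx, h1, smul_eq_mul,
          smul_eq_mul, mul_one, mul_zero, add_zero]
      have huv : star u ⬝ᵥ ((star x ⬝ᵥ v) • x + (star u ⬝ᵥ v) • u) = star u ⬝ᵥ v := by
        rw [dotProduct_add, dotProduct_smul, dotProduct_smul, h1', h2, smul_eq_mul,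
          smul_eq_mul, mul_one, mul_zero, zero_add]
      rw [hv, dotProduct_zero] at hxv huv
      exact ⟨hxv.symm, huv.symm⟩
    · rintro ⟨hv1, hv2⟩
      rw [hPv, hv1, hv2, zero_smul, zero_smul, sub_zero, sub_zero]
end

section
/- Let n ≥ 1 and let ψ : M_n(ℂ) → M_n(ℂ) be a linear positive map such that ⟨y, ψ(x x*) y⟩ = 0 for all x, y ∈ ℂ^n satisfying Σ_i x_i y_i = 0. Then there exists λ ≥ 0 such that ψ(X) = λ·Xᵀ for all X ∈ M_n(ℂ). (That is, the transposition map is an exposed positive map.) -/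
open Matrix
open scoped ComplexOrder Kronecker

private lemma vecMulVec_mulVec' {n : ℕ} (a b y : Fin n → ℂ) :
    (vecMulVec a b) *ᵥ y = (b ⬝ᵥ y) • a := by
  funext i
  simp only [mulVec, dotProduct, vecMulVec_apply, Pi.smul_apply, smul_eq_mul, Finset.sum_mul]
  exact Finset.sum_congr rfl fun j _ => by ring

private lemma quad' {n : ℕ} (a b y : Fin n → ℂ) :
    star y ⬝ᵥ (vecMulVec a b) *ᵥ y = (star y ⬝ᵥ a) * (b ⬝ᵥ y) := by
  rw [vecMulVec_mulVec', dotProduct_smul, smul_eq_mul, mul_comm]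

private lemma quadT {n : ℕ} (v y : Fin n → ℂ) :
    star y ⬝ᵥ (vecMulVec (star v) v) *ᵥ y = star (v ⬝ᵥ y) * (v ⬝ᵥ y) := by
  rw [quad', star_dotProduct, star_star]

private lemma outer_posSemidef {n : ℕ} (x : Fin n → ℂ) :
    (vecMulVec x (star x)).PosSemidef := by
  rw [vecMulVec_eq (Fin 1), ← conjTranspose_replicateCol]
  exact posSemidef_self_mul_conjTranspose _

private lemma exists_real_of_nonneg {z : ℂ} (hz : 0 ≤ z) : ∃ t : ℝ, 0 ≤ t ∧ z = (t : ℂ) := by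
  rw [Complex.nonneg_iff] at hz
  exact ⟨z.re, hz.1, by apply Complex.ext <;> simp [hz.2.symm]⟩

private lemma rank_one_of_vanishing {n : ℕ} {M : Matrix (Fin n) (Fin n) ℂ} {x : Fin n → ℂ}
    (hM : M.PosSemidef) (hx : x ≠ 0)
    (hv : ∀ y, x ⬝ᵥ y = 0 → star y ⬝ᵥ M *ᵥ y = 0) :
    ∃ c : ℝ, 0 ≤ c ∧ M = (c : ℂ) • vecMulVec (star x) x := by
  have hker : ∀ y, x ⬝ᵥ y = 0 → M *ᵥ y = 0 := fun y h =>
    (hM.dotProduct_mulVec_zero_iff y).mp (hv y h)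
  have hsx : star (star x) = x := star_star x
  obtain ⟨s, hs0, hsnu⟩ : ∃ s : ℝ, 0 ≤ s ∧ x ⬝ᵥ star x = (s : ℂ) := by
    apply exists_real_of_nonneg
    have h := dotProduct_star_self_nonneg (star x)
    rwa [hsx] at h
  have hs_ne : (s : ℂ) ≠ 0 := by
    rw [← hsnu]
    intro h
    apply hx
    have h2 : star (star x) ⬝ᵥ (star x) = 0 := by rwa [hsx]
    have := dotProduct_star_self_eq_zero.mp h2
    rw [← hsx, this, star_zero]
  obtain ⟨t, ht0, htw⟩ : ∃ t : ℝ, 0 ≤ t ∧ x ⬝ᵥ (M *ᵥ star x) = (t : ℂ) := by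
    apply exists_real_of_nonneg
    have h := hM.dotProduct_mulVec_nonneg (star x)
    rwa [hsx] at h
  set w := M *ᵥ star x with hw
  set μ : ℂ := (t : ℂ) / s with hmu
  set r := w - μ • star x with hr
  have hxr : x ⬝ᵥ r = 0 := by
    rw [hr, dotProduct_sub, dotProduct_smul, htw, hsnu, smul_eq_mul, hmu]
    field_simp
    ring
  have hMr : M *ᵥ r = 0 := hker r hxr
  have hrw : star r ⬝ᵥ w = 0 := by
    have h1 : star r ᵥ* M = 0 := by
      rw [← hM.1, ← star_mulVec, hMr, star_zero]
    rw [hw, dotProduct_mulVec, h1, zero_dotProduct]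
  have hrv : star r ⬝ᵥ star x = 0 := by
    rw [star_dotProduct, hsx, hxr, star_zero]
  have hr0 : r = 0 := by
    have h0 : star r ⬝ᵥ r = 0 := by
      calc star r ⬝ᵥ r = star r ⬝ᵥ w - μ * (star r ⬝ᵥ star x) := by
            rw [hr, dotProduct_sub, dotProduct_smul, smul_eq_mul]
        _ = 0 := by rw [hrw, hrv]; ring
    exact dotProduct_star_self_eq_zero.mp h0
  have hwv : w = μ • star x := by
    have := sub_eq_zero.mp hr0
    exact this
  have hcol : ∀ y, M *ᵥ y = ((x ⬝ᵥ y) / s * μ) • star x := by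
    intro y
    have hdec : x ⬝ᵥ (y - ((x ⬝ᵥ y) / s) • star x) = 0 := by
      rw [dotProduct_sub, dotProduct_smul, hsnu, smul_eq_mul]
      field_simp
      ring
    have h0 := hker _ hdec
    rw [mulVec_sub, mulVec_smul, sub_eq_zero] at h0
    rw [h0, ← hw, hwv, smul_smul]
  refine ⟨t / (s * s), by positivity, ?_⟩
  ext i j
  have h1 : M i j = (x j / (s:ℂ) * μ) * star x i := by
    have h0 := congrFun (hcol (Pi.single j 1)) i
    simpa [mulVec, dotProduct_single, Pi.smul_apply, smul_eq_mul] using h0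
  rw [h1]
  simp only [Pi.smul_apply, smul_eq_mul, Matrix.smul_apply, vecMulVec_apply, hmu]
  push_cast
  field_simp

private lemma exists_dual_vec {n : ℕ} (f : Fin 2 → (Fin n → ℂ))
    (h : LinearIndependent ℂ f) (k : Fin 2) :
    ∃ y : Fin n → ℂ, ∀ i, f i ⬝ᵥ y = if i = k then 1 else 0 := by
  classical
  set W := Submodule.span ℂ (Set.range f) with hW
  let B : Module.Basis (Fin 2) ℂ W := Module.Basis.span h
  let φ := Subspace.dualLift W (B.coord k)
  refine ⟨fun j => φ (Pi.single j 1), fun i => ?_⟩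
  have hdecomp : f i = ∑ j, (f i j) • (Pi.single j 1 : Fin n → ℂ) := by
    funext l
    simp [Pi.single_apply, Finset.sum_apply]
  have hphi : f i ⬝ᵥ (fun j => φ (Pi.single j 1)) = φ (f i) := by
    conv_rhs => rw [hdecomp]
    rw [map_sum]
    simp [dotProduct, _root_.map_smul, smul_eq_mul]
  rw [hphi]
  have hmem : f i ∈ W := Submodule.subset_span ⟨i, rfl⟩
  rw [show φ (f i) = (B.coord k) ⟨f i, hmem⟩ from Subspace.dualLift_of_mem hmem]
  have hBi : (⟨f i, hmem⟩ : W) = B i := by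
    apply Subtype.ext
    exact congrArg Subtype.val (Module.Basis.span_apply h i).symm
  rw [hBi, Module.Basis.coord_apply, B.repr_self]
  simp [Finsupp.single_apply, eq_comm]

/-- The transposition map on `M_n(ℂ)` is exposed: any linear positive map `ψ` with
`⟨y, ψ(x x*) y⟩ = 0` whenever `Σ_i x_i y_i = 0` is a nonnegative multiple of the
transposition. -/
theorem transpose_exposed (n : ℕ) (hn : 1 ≤ n)
    (ψ : Matrix (Fin n) (Fin n) ℂ →ₗ[ℂ] Matrix (Fin n) (Fin n) ℂ)
    (hpos : ∀ X, X.PosSemidef → (ψ X).PosSemidef)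
    (hvan : ∀ x y : Fin n → ℂ, x ⬝ᵥ y = 0 →
      star y ⬝ᵥ (ψ (vecMulVec x (star x))).mulVec y = 0) :
    ∃ lam : ℝ, 0 ≤ lam ∧ ∀ X, ψ X = (lam : ℂ) • Xᵀ := by
  classical
  have hc : ∀ x : Fin n → ℂ, x ≠ 0 → ∃ c : ℝ, 0 ≤ c ∧
      ψ (vecMulVec x (star x)) = (c : ℂ) • vecMulVec (star x) x := fun x hx =>
    rank_one_of_vanishing (hpos _ (outer_posSemidef x)) hx (fun y hy => hvan x y hy)
  set x₀ : Fin n → ℂ := fun _ => 1 with hx₀def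
  have hx₀ : x₀ ≠ 0 := by
    intro h
    exact one_ne_zero (congrFun h ⟨0, hn⟩)
  obtain ⟨lam, hlam0, hlam⟩ := hc x₀ hx₀
  refine ⟨lam, hlam0, ?_⟩
  have hT₀ : vecMulVec (star x₀) x₀ ≠ 0 := by
    intro h
    have h2 := congrFun (congrFun h ⟨0, hn⟩) ⟨0, hn⟩
    simp [vecMulVec_apply, hx₀def] at h2
  have key : ∀ v : Fin n → ℂ, ψ (vecMulVec v (star v)) = (lam : ℂ) • vecMulVec (star v) v := by
    intro v
    by_cases hv : v = 0
    · subst hv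
      have h1 : vecMulVec (0 : Fin n → ℂ) (star (0 : Fin n → ℂ)) = 0 := by
        ext i j; simp [vecMulVec_apply]
      have h2 : vecMulVec (star (0 : Fin n → ℂ)) (0 : Fin n → ℂ) = 0 := by
        ext i j; simp [vecMulVec_apply]
      rw [h1, h2, map_zero, smul_zero]
    obtain ⟨a, ha0, ha⟩ := hc v hv
    suffices hav : (a : ℂ) = (lam : ℂ) by rw [ha, hav]
    by_cases hdep : ∃ γ : ℂ, v = γ • x₀
    · obtain ⟨γ, rfl⟩ := hdep
      have hγ : γ ≠ 0 := by
        rintro rfl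
        simp at hv
      have e1 : vecMulVec (γ • x₀) (star (γ • x₀))
          = (γ * star γ) • vecMulVec x₀ (star x₀) := by
        ext i j
        simp only [vecMulVec_apply, Pi.smul_apply, Pi.star_apply, smul_eq_mul,
          Matrix.smul_apply, star_mul']
        ring
      have e2 : vecMulVec (star (γ • x₀)) (γ • x₀)
          = (γ * star γ) • vecMulVec (star x₀) x₀ := by
        ext i j
        simp only [vecMulVec_apply, Pi.smul_apply, Pi.star_apply, smul_eq_mul,
          Matrix.smul_apply, star_mul']
        ring
      have heq := ha
      rw [e1, e2, _root_.map_smul, hlam, smul_smul, smul_smul] at heq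
      have hk : γ * star γ ≠ 0 := mul_ne_zero hγ (star_ne_zero.mpr hγ)
      have hscal : γ * star γ * (lam : ℂ) = (a : ℂ) * (γ * star γ) :=
        smul_left_injective ℂ hT₀ heq
      apply mul_left_cancel₀ hk
      linear_combination -hscal
    · have hLI : LinearIndependent ℂ ![v, x₀] := by
        rw [linearIndependent_fin2]
        refine ⟨by simpa using hx₀, fun γ hγ => ?_⟩
        exact hdep ⟨γ, by simpa using hγ.symm⟩
      obtain ⟨y₁, hy₁⟩ := exists_dual_vec _ hLI 0
      obtain ⟨y₂, hy₂⟩ := exists_dual_vec _ hLI 1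
      have hvy₁ : v ⬝ᵥ y₁ = 1 := by simpa using hy₁ 0
      have hzy₁ : x₀ ⬝ᵥ y₁ = 0 := by simpa using hy₁ 1
      have hvy₂ : v ⬝ᵥ y₂ = 0 := by simpa using hy₂ 0
      have hzy₂ : x₀ ⬝ᵥ y₂ = 1 := by simpa using hy₂ 1
      have h1ne : v + x₀ ≠ 0 := by
        intro h
        refine hdep ⟨-1, ?_⟩
        rw [eq_neg_iff_add_eq_zero.mpr h, neg_one_smul]
      have h2ne : v + (2 : ℂ) • x₀ ≠ 0 := by
        intro h
        refine hdep ⟨-2, ?_⟩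
        rw [eq_neg_iff_add_eq_zero.mpr h, neg_smul]
      obtain ⟨b₁, hb₁0, hb₁⟩ := hc (v + x₀) h1ne
      obtain ⟨b₂, hb₂0, hb₂⟩ := hc (v + (2 : ℂ) • x₀) h2ne
      have mid : vecMulVec (v + (2:ℂ) • x₀) (star (v + (2:ℂ) • x₀)) + vecMulVec v (star v)
          = (2:ℂ) • vecMulVec (v + x₀) (star (v + x₀)) + (2:ℂ) • vecMulVec x₀ (star x₀) := by
        ext i j
        simp only [vecMulVec_apply, Pi.add_apply, Pi.star_apply, Pi.smul_apply,
          smul_eq_mul, Complex.star_def, _root_.map_add, _root_.map_mul, map_ofNat,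
          Matrix.add_apply, Matrix.smul_apply]
        ring
      have mE := congrArg ψ mid
      rw [map_add, map_add, _root_.map_smul, _root_.map_smul, hb₂, ha, hb₁, hlam] at mE
      have d₁ : (v + (2:ℂ) • x₀) ⬝ᵥ y₁ = 1 := by
        rw [add_dotProduct, smul_dotProduct, hvy₁, hzy₁]; simp
      have d₂ : (v + x₀) ⬝ᵥ y₁ = 1 := by
        rw [add_dotProduct, hvy₁, hzy₁]; ring
      have d₃ : (v + (2:ℂ) • x₀) ⬝ᵥ y₂ = 2 := by
        rw [add_dotProduct, smul_dotProduct, hvy₂, hzy₂]; simp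
      have d₄ : (v + x₀) ⬝ᵥ y₂ = 1 := by
        rw [add_dotProduct, hvy₂, hzy₂]; ring
      have dv₃ : v ⬝ᵥ (y₁ + y₂) = 1 := by
        rw [dotProduct_add, hvy₁, hvy₂]; ring
      have dz₃ : x₀ ⬝ᵥ (y₁ + y₂) = 1 := by
        rw [dotProduct_add, hzy₁, hzy₂]; ring
      have d₅ : (v + (2:ℂ) • x₀) ⬝ᵥ (y₁ + y₂) = 3 := by
        rw [add_dotProduct, smul_dotProduct, dv₃, dz₃]; norm_num
      have d₆ : (v + x₀) ⬝ᵥ (y₁ + y₂) = 2 := by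
        rw [add_dotProduct, dv₃, dz₃]; norm_num
      have E := fun y : Fin n → ℂ =>
        congrArg (fun T : Matrix (Fin n) (Fin n) ℂ => star y ⬝ᵥ T *ᵥ y) mE
      have e₁ := E y₁
      simp only [add_mulVec, smul_mulVec, dotProduct_add, dotProduct_smul, quadT,
        smul_eq_mul, d₁, d₂, hvy₁, hzy₁, star_one, star_zero, mul_one, mul_zero,
        one_mul, zero_mul, add_zero, zero_add] at e₁
      have e₂ := E y₂
      simp only [add_mulVec, smul_mulVec, dotProduct_add, dotProduct_smul, quadT,
        smul_eq_mul, d₃, d₄, hvy₂, hzy₂, star_one, star_zero, mul_one, mul_zero,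
        one_mul, zero_mul, add_zero, zero_add, Complex.star_def, map_ofNat] at e₂
      have e₃ := E (y₁ + y₂)
      simp only [add_mulVec, smul_mulVec, dotProduct_add, dotProduct_smul, quadT,
        smul_eq_mul, d₅, d₆, dv₃, dz₃, star_one, star_zero, mul_one, mul_zero,
        one_mul, zero_mul, add_zero, zero_add, Complex.star_def, map_ofNat] at e₃
      linear_combination (7/4 : ℂ) * e₁ + (5/4 : ℂ) * e₂ - (3/4 : ℂ) * e₃
  have gen : ∀ a b : Fin n → ℂ, ψ (vecMulVec a b) = (lam : ℂ) • (vecMulVec a b)ᵀ := by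
    intro a b
    have hbc : b = star (star b) := (star_star b).symm
    rw [hbc]
    set c := star b with hcdef
    have htrans : (vecMulVec a (star c))ᵀ = vecMulVec (star c) a := by
      ext i j
      simp [vecMulVec_apply, transpose_apply, mul_comm]
    rw [htrans]
    have polA : (4 : ℂ) • vecMulVec a (star c)
        = vecMulVec (a + c) (star (a + c)) - vecMulVec (a - c) (star (a - c))
          + Complex.I • vecMulVec (a + Complex.I • c) (star (a + Complex.I • c))
          - Complex.I • vecMulVec (a - Complex.I • c) (star (a - Complex.I • c)) := by
      ext i j
      simp only [vecMulVec_apply, Pi.add_apply, Pi.sub_apply, Pi.smul_apply, Pi.star_apply,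
        smul_eq_mul, Matrix.add_apply, Matrix.sub_apply, Matrix.smul_apply,
        Complex.star_def, _root_.map_add, _root_.map_sub, _root_.map_mul, Complex.conj_I]
      linear_combination (2 * a i * (starRingEnd ℂ) (c j)
        - 2 * c i * (starRingEnd ℂ) (a j)) * Complex.I_sq
    have polB : (4 : ℂ) • vecMulVec (star c) a
        = vecMulVec (star (a + c)) (a + c) - vecMulVec (star (a - c)) (a - c)
          + Complex.I • vecMulVec (star (a + Complex.I • c)) (a + Complex.I • c)
          - Complex.I • vecMulVec (star (a - Complex.I • c)) (a - Complex.I • c) := by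
      ext i j
      simp only [vecMulVec_apply, Pi.add_apply, Pi.sub_apply, Pi.smul_apply, Pi.star_apply,
        smul_eq_mul, Matrix.add_apply, Matrix.sub_apply, Matrix.smul_apply,
        Complex.star_def, _root_.map_add, _root_.map_sub, _root_.map_mul, Complex.conj_I]
      linear_combination (2 * (starRingEnd ℂ) (c i) * a j
        - 2 * (starRingEnd ℂ) (a i) * c j) * Complex.I_sq
    have h4 : (4 : ℂ) ≠ 0 := by norm_num
    apply smul_right_injective (Matrix (Fin n) (Fin n) ℂ) h4
    calc (4 : ℂ) • ψ (vecMulVec a (star c))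
        = ψ ((4 : ℂ) • vecMulVec a (star c)) := (_root_.map_smul ψ _ _).symm
      _ = (lam : ℂ) • ((4 : ℂ) • vecMulVec (star c) a) := by
          rw [polA, polB, map_sub, map_add, map_sub, _root_.map_smul, _root_.map_smul, key, key, key, key]
          module
      _ = (4 : ℂ) • ((lam : ℂ) • vecMulVec (star c) a) := smul_comm _ _ _
  intro X
  have hsingle : ∀ (i j : Fin n) (cc : ℂ),
      Matrix.single i j cc = vecMulVec (Pi.single i cc) (Pi.single j 1) := by
    intro i j cc
    ext k l
    simp only [Matrix.single, of_apply, vecMulVec_apply, Pi.single_apply]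
    by_cases h1 : i = k <;> by_cases h2 : j = l <;>
      simp [h1, h2, eq_comm]
  have hX := matrix_eq_sum_single X
  calc ψ X = ψ (∑ i, ∑ j, Matrix.single i j (X i j)) := by rw [← hX]
    _ = ∑ i, ∑ j, ψ (Matrix.single i j (X i j)) := by simp only [map_sum]
    _ = ∑ i, ∑ j, (lam : ℂ) • (Matrix.single i j (X i j))ᵀ := by
        refine Finset.sum_congr rfl fun i _ => Finset.sum_congr rfl fun j _ => ?_
        rw [hsingle, gen, ← hsingle]
    _ = (lam : ℂ) • Xᵀ := by
        simp only [← Finset.smul_sum, ← Matrix.transpose_sum, ← hX]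
end

section
/- Let n ≥ 1, let U ∈ M_n(ℂ) be unitary, and let ψ : M_n(ℂ) → M_n(ℂ) be a linear positive map such that ⟨y, ψ(x x*) y⟩ = 0 for all x, y ∈ ℂ^n satisfying ⟨U x̄, y⟩ = 0. Then there exists λ ≥ 0 such that ψ(X) = λ·U Xᵀ U* for all X ∈ M_n(ℂ). (That is, for unitary U the completely copositive map φ^U(X) = U Xᵀ U* is an exposed positive map.) -/
open Matrix
open scoped ComplexOrder Kronecker

variable {n : ℕ}

lemma my_vecMulVec_mulVec (a b z : Fin n → ℂ) :
    (vecMulVec a b).mulVec z = (b ⬝ᵥ z) • a := by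
  funext i
  simp [vecMulVec_apply, mulVec, dotProduct, Finset.mul_sum, mul_assoc, mul_comm, mul_left_comm]

lemma my_psd_vecMulVec (x : Fin n → ℂ) : (vecMulVec x (star x)).PosSemidef := by
  refine PosSemidef.of_dotProduct_mulVec_nonneg ?_ ?_
  · ext i j
    simp [conjTranspose_apply, vecMulVec_apply, mul_comm]
  · intro y
    rw [my_vecMulVec_mulVec, dotProduct_smul]
    have h : star y ⬝ᵥ x = star (star x ⬝ᵥ y) := star_dotProduct y x
    rw [h, smul_eq_mul, mul_comm]
    exact star_mul_self_nonneg _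

lemma my_dot_star_self_real (w : Fin n → ℂ) :
    star w ⬝ᵥ w = ((∑ i, Complex.normSq (w i) : ℝ) : ℂ) := by
  push_cast
  simp only [dotProduct, Pi.star_apply]
  exact Finset.sum_congr rfl fun i _ => (Complex.normSq_eq_conj_mul_self).symm ▸ rfl

lemma my_psd_rank_one {A : Matrix (Fin n) (Fin n) ℂ} {v : Fin n → ℂ}
    (hA : A.PosSemidef) (hv : v ≠ 0)
    (h : ∀ y, star v ⬝ᵥ y = 0 → star y ⬝ᵥ A.mulVec y = 0) :
    ∃ c : ℝ, 0 ≤ c ∧ A = (c : ℂ) • vecMulVec v (star v) := by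
  have hker : ∀ y, star v ⬝ᵥ y = 0 → A.mulVec y = 0 := fun y hy =>
    (hA.dotProduct_mulVec_zero_iff y).mp (h y hy)
  set m : ℂ := star v ⬝ᵥ v with hm_def
  have hm : m ≠ 0 := fun h0 => hv (dotProduct_star_self_eq_zero.mp h0)
  set q : ℂ := star v ⬝ᵥ A.mulVec v with hq_def
  have hq : 0 ≤ q := hA.dotProduct_mulVec_nonneg v
  set β : ℂ := q / m with hβ_def
  set s : Fin n → ℂ := A.mulVec v - β • v with hs_def
  have hs1 : star v ⬝ᵥ s = 0 := by
    rw [hs_def, dotProduct_sub, dotProduct_smul, ← hq_def, ← hm_def, smul_eq_mul, hβ_def]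
    field_simp
    ring
  have hsv : star s ⬝ᵥ v = 0 := by
    rw [star_dotProduct, hs1]; simp
  have hkey : star s ⬝ᵥ A.mulVec v = 0 := by
    rw [dotProduct_mulVec]
    have : star s ᵥ* A = 0 := by
      rw [← hA.1, ← star_mulVec, hker s hs1]
      simp
    rw [this, zero_dotProduct]
  have hss : star s ⬝ᵥ s = 0 := by
    have hAv : A.mulVec v = s + β • v := by rw [hs_def, sub_add_cancel]
    rw [hAv, dotProduct_add, dotProduct_smul, hsv, smul_zero, add_zero] at hkey
    exact hkey
  have hs0 : s = 0 := dotProduct_star_self_eq_zero.mp hss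
  have hAv : A.mulVec v = β • v := by
    have := sub_eq_zero.mp (hs_def ▸ hs0)
    exact this
  have hz : ∀ z, A.mulVec z = (((star v ⬝ᵥ z) / m) * β) • v := by
    intro z
    set α : ℂ := (star v ⬝ᵥ z) / m with hα_def
    have hr : star v ⬝ᵥ (z - α • v) = 0 := by
      rw [dotProduct_sub, dotProduct_smul, ← hm_def, smul_eq_mul, hα_def]
      field_simp
      ring
    have h1 : A.mulVec (z - α • v) = 0 := hker _ hr
    have h2 : A.mulVec z = A.mulVec (z - α • v) + α • A.mulVec v := by
      rw [mulVec_sub, mulVec_smul]; abel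
    rw [h2, h1, zero_add, hAv, smul_smul]
  have hqre : q = ((q.re : ℝ) : ℂ) := by
    have := (Complex.nonneg_iff.mp hq).2
    exact Complex.ext rfl (by simpa using this.symm)
  have hmr := my_dot_star_self_real v
  set mr : ℝ := ∑ i, Complex.normSq (v i) with hmr_def
  have hmre : m = (mr : ℂ) := hmr
  have hmrpos : 0 < mr := by
    rcases lt_or_eq_of_le (Finset.sum_nonneg fun i _ => Complex.normSq_nonneg (v i)) with h' | h'
    · exact h'
    · exact absurd (by rw [hmre, hmr_def, ← h']; simp) hm
  refine ⟨q.re / (mr * mr), div_nonneg (Complex.nonneg_iff.mp hq).1 (by positivity), ?_⟩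
  ext i j
  have := congrFun (hz (Pi.single j 1)) i
  rw [mulVec_single_one] at this
  simp only [col_apply] at this
  have hdot : star v ⬝ᵥ Pi.single j 1 = star (v j) := by
    rw [dotProduct_single, mul_one]; rfl
  rw [hdot] at this
  rw [this]
  simp only [Matrix.smul_apply, Pi.smul_apply, vecMulVec_apply, Pi.star_apply, smul_eq_mul]
  rw [hβ_def, hqre, hmre]
  push_cast [Complex.ofReal_re]
  field_simp

noncomputable def phiAux (n : ℕ) (U : Matrix (Fin n) (Fin n) ℂ) :
    Matrix (Fin n) (Fin n) ℂ →ₗ[ℂ] Matrix (Fin n) (Fin n) ℂ where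
  toFun X := U * Xᵀ * Uᴴ
  map_add' X Y := by rw [transpose_add, Matrix.mul_add, Matrix.add_mul]
  map_smul' t X := by rw [transpose_smul, Matrix.mul_smul, Matrix.smul_mul]; rfl

@[simp] lemma phiAux_apply (n : ℕ) (U : Matrix (Fin n) (Fin n) ℂ)
    (X : Matrix (Fin n) (Fin n) ℂ) : phiAux n U X = U * Xᵀ * Uᴴ := rfl

/-- For a unitary `U ∈ M_n(ℂ)`, the completely copositive map `φ^U(X) = U Xᵀ U*`
is exposed: any linear positive map `ψ` with `⟨y, ψ(x x*) y⟩ = 0` whenever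
`⟨U x̄, y⟩ = 0` is a nonnegative multiple of `φ^U`. -/
theorem copositive_unitary_exposed (n : ℕ) (hn : 1 ≤ n)
    (U : Matrix (Fin n) (Fin n) ℂ) (hU : U * Uᴴ = 1)
    (ψ : Matrix (Fin n) (Fin n) ℂ →ₗ[ℂ] Matrix (Fin n) (Fin n) ℂ)
    (hpos : ∀ X, X.PosSemidef → (ψ X).PosSemidef)
    (hvan : ∀ x y : Fin n → ℂ, star (U.mulVec (star x)) ⬝ᵥ y = 0 →
      star y ⬝ᵥ (ψ (vecMulVec x (star x))).mulVec y = 0) :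
    ∃ lam : ℝ, 0 ≤ lam ∧ ∀ X, ψ X = (lam : ℂ) • (U * Xᵀ * Uᴴ) := by
  classical
  have hUU : Uᴴ * U = 1 := mul_eq_one_comm.mp hU
  set v : (Fin n → ℂ) → (Fin n → ℂ) := fun x => U.mulVec (star x) with hv_def
  have hinj : ∀ a b : Fin n → ℂ, U.mulVec a = U.mulVec b → a = b := by
    intro a b hab
    have h2 := congrArg (fun z => Uᴴ.mulVec z) hab
    simpa [mulVec_mulVec, hUU] using h2
  have hvne : ∀ x, x ≠ 0 → v x ≠ 0 := by
    intro x hx h0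
    apply hx
    have h1 : U.mulVec (star x) = U.mulVec 0 := by simpa [mulVec_zero] using h0
    have h2 := hinj _ _ h1
    simpa using congrArg star h2
  have hvmv0 : vecMulVec (0 : Fin n → ℂ) (star (0 : Fin n → ℂ)) = 0 := by
    ext i j; simp [vecMulVec_apply]
  have hex : ∀ x, ∃ c : ℝ, 0 ≤ c ∧
      ψ (vecMulVec x (star x)) = (c : ℂ) • vecMulVec (v x) (star (v x)) := by
    intro x
    by_cases hx : x = 0
    · refine ⟨0, le_refl _, ?_⟩
      subst hx
      rw [hvmv0, map_zero]
      simp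
    · exact my_psd_rank_one (hpos _ (my_psd_vecMulVec x)) (hvne x hx)
        (fun y hy => hvan x y hy)
  choose c hc0 hc using hex
  -- conjugation formula
  have hconj : ∀ x : Fin n → ℂ, U * (vecMulVec x (star x))ᵀ * Uᴴ
      = vecMulVec (v x) (star (v x)) := by
    intro x
    ext i j
    simp only [mul_apply, transpose_apply, vecMulVec_apply, conjTranspose_apply,
      Pi.star_apply, hv_def, mulVec, dotProduct, star_sum, star_mul', star_star,
      Finset.sum_mul, Finset.mul_sum]
    exact Finset.sum_congr rfl fun l _ => Finset.sum_congr rfl fun k _ => by ring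
  have hv_add : ∀ a b : Fin n → ℂ, v (a + b) = v a + v b := by
    intro a b; simp [hv_def, star_add, mulVec_add]
  have hv_smul : ∀ (t : ℂ) (a : Fin n → ℂ), v (t • a) = star t • v a := by
    intro t a; simp [hv_def, star_smul, mulVec_smul]
  have hstep : ∀ x y : Fin n → ℂ, x ≠ 0 → y ≠ 0 → (∀ a : ℂ, x ≠ a • y) →
      c (x + y) = c x := by
    intro x y hx hy hind
    have hvy := hvne y hy
    have hmy : star (v y) ⬝ᵥ v y ≠ 0 := fun h0 => hvy (dotProduct_star_self_eq_zero.mp h0)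
    set p : ℂ := (star (v y) ⬝ᵥ v x) / (star (v y) ⬝ᵥ v y) with hp_def
    set w : Fin n → ℂ := v x - p • v y with hw_def
    have hwy : star (v y) ⬝ᵥ w = 0 := by
      rw [hw_def, dotProduct_sub, dotProduct_smul, smul_eq_mul, hp_def]
      field_simp
      ring
    have hw0 : w ≠ 0 := by
      intro h0
      rw [hw_def] at h0
      have hvx : v x = p • v y := sub_eq_zero.mp h0
      apply hind (star p)
      have h1 : U.mulVec (star x) = U.mulVec (p • star y) := by
        rw [mulVec_smul]; exact hvx
      have h2 := hinj _ _ h1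
      have h3 := congrArg star h2
      simpa [star_smul] using h3
    set m : ℂ := star w ⬝ᵥ w with hm_def
    have hm0 : m ≠ 0 := fun h0 => hw0 (dotProduct_star_self_eq_zero.mp h0)
    set mr : ℝ := ∑ i, Complex.normSq (w i) with hmr_def
    have hmre : m = (mr : ℂ) := my_dot_star_self_real w
    have hvxw : star (v x) ⬝ᵥ w = m := by
      have hvx : v x = w + p • v y := by rw [hw_def, sub_add_cancel]
      rw [hvx]
      simp [star_add, add_dotProduct, star_smul, smul_dotProduct, hwy, hm_def]
    have hwvx : star w ⬝ᵥ v x = m := by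
      rw [star_dotProduct, hvxw, hmre, Complex.star_def, Complex.conj_ofReal]
    have hwvy : star w ⬝ᵥ v y = 0 := by
      rw [star_dotProduct, hwy, star_zero]
    have hExp : ∀ t : ℂ, vecMulVec (x + t • y) (star (x + t • y)) =
        vecMulVec x (star x) + t • vecMulVec y (star x) + star t • vecMulVec x (star y)
          + (t * star t) • vecMulVec y (star y) := by
      intro t
      ext i j
      simp only [Matrix.add_apply, Matrix.smul_apply, vecMulVec_apply, Pi.add_apply, Pi.smul_apply,
        Pi.star_apply, star_add, star_smul, smul_eq_mul, star_mul', star_star]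
      ring
    have E : ∀ t : ℂ, (c (x + t • y) : ℂ) * (m * m) =
        (c x : ℂ) * (m * m)
          + t * (star w ⬝ᵥ (ψ (vecMulVec y (star x))).mulVec w)
          + star t * (star w ⬝ᵥ (ψ (vecMulVec x (star y))).mulVec w) := by
      intro t
      have h1 : (c (x + t • y) : ℂ) • vecMulVec (v (x + t • y)) (star (v (x + t • y))) =
          (c x : ℂ) • vecMulVec (v x) (star (v x)) + t • ψ (vecMulVec y (star x))
            + star t • ψ (vecMulVec x (star y))
            + (t * star t) • ((c y : ℂ) • vecMulVec (v y) (star (v y))) := by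
        rw [← hc (x + t • y), ← hc x, ← hc y, hExp t]
        simp only [map_add, _root_.map_smul]
      have hvxy : v (x + t • y) = v x + star t • v y := by
        rw [hv_add, hv_smul]
      rw [hvxy] at h1
      have h3 := congrArg (fun M => star w ⬝ᵥ M.mulVec w) h1
      simp only [add_mulVec, smul_mulVec, my_vecMulVec_mulVec, dotProduct_add,
        dotProduct_smul, add_dotProduct, smul_dotProduct, smul_eq_mul, star_add, star_smul,
        star_star, hvxw, hwy, hwvx, hwvy] at h3
      linear_combination h3
    have hmm : m * m = ((mr * mr : ℝ) : ℂ) := by rw [hmre]; push_cast; ring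
    have hmr0 : (mr : ℂ) ≠ 0 := by rw [← hmre]; exact hm0
    have hEs : ∀ s : ℝ, c (x + (s : ℂ) • y) = c x + s * (c (x + y) - c x) := by
      intro s
      have h1 := E (s : ℂ)
      have h2 := E 1
      rw [show star ((s : ℂ)) = ((s : ℂ)) by
        rw [Complex.star_def, Complex.conj_ofReal]] at h1
      rw [show star (1 : ℂ) = 1 from star_one ℂ] at h2
      have h3 : (c (x + (s : ℂ) • y) : ℂ) * (m * m) =
          ((c x : ℂ) + (s : ℂ) * ((c (x + y) : ℂ) - (c x : ℂ))) * (m * m) := by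
        rw [one_smul] at h2
        linear_combination h1 - (s : ℂ) * h2
      have hmmne : m * m ≠ 0 := mul_ne_zero hm0 hm0
      have h4 := mul_right_cancel₀ hmmne h3
      exact_mod_cast h4
    by_contra hne
    set g : ℝ := c (x + y) - c x with hg_def
    have hgne : g ≠ 0 := sub_ne_zero.mpr hne
    set s : ℝ := (-(c x) - 1) / g with hs_def
    have h5 := hEs s
    have h6 : c (x + (s : ℂ) • y) = -1 := by
      rw [h5, hs_def]
      field_simp
      ring
    have h7 := hc0 (x + (s : ℂ) • y)
    rw [h6] at h7
    linarith
  have hdep : ∀ (a : ℂ) (xx : Fin n → ℂ), xx ≠ 0 → a ≠ 0 → c (a • xx) = c xx := by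
    intro a xx hxx ha
    have h1 := hc (a • xx)
    have h2 : vecMulVec (a • xx) (star (a • xx)) = (a * star a) • vecMulVec xx (star xx) := by
      ext i j
      simp only [vecMulVec_apply, Pi.smul_apply, Pi.star_apply, star_smul, Matrix.smul_apply,
        smul_eq_mul, star_mul', star_star]
      ring
    have h4 : vecMulVec (v (a • xx)) (star (v (a • xx)))
        = (a * star a) • vecMulVec (v xx) (star (v xx)) := by
      rw [hv_smul]
      ext i j
      simp only [vecMulVec_apply, Pi.smul_apply, Pi.star_apply, star_smul, Matrix.smul_apply,
        smul_eq_mul, star_mul', star_star]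
      ring
    rw [h2, _root_.map_smul, hc xx, h4] at h1
    obtain ⟨i, hi⟩ : ∃ i, v xx i ≠ 0 := by
      by_contra hcon
      push_neg at hcon
      exact hvne xx hxx (funext hcon)
    have h5 := congrFun (congrFun h1 i) i
    simp only [Matrix.smul_apply, vecMulVec_apply, Pi.star_apply, smul_eq_mul] at h5
    have hk : (a * star a) * (v xx i * star (v xx i)) ≠ 0 :=
      mul_ne_zero (mul_ne_zero ha (star_ne_zero.mpr ha))
        (mul_ne_zero hi (star_ne_zero.mpr hi))
    have h6 : ((c (a • xx) : ℂ)) * ((a * star a) * (v xx i * star (v xx i)))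
        = (c xx : ℂ) * ((a * star a) * (v xx i * star (v xx i))) := by
      linear_combination -h5
    exact_mod_cast mul_right_cancel₀ hk h6
  have hconst : ∀ x y : Fin n → ℂ, x ≠ 0 → y ≠ 0 → c x = c y := by
    intro x y hx hy
    by_cases hxy : ∃ a : ℂ, x = a • y
    · obtain ⟨a, rfl⟩ := hxy
      have ha : a ≠ 0 := by rintro rfl; simp at hx
      exact hdep a y hy ha
    · push_neg at hxy
      have hyx : ∀ b : ℂ, y ≠ b • x := by
        intro b hb
        have hb0 : b ≠ 0 := by
          rintro rfl
          rw [zero_smul] at hb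
          exact hy hb
        exact hxy b⁻¹ (by rw [hb, smul_smul, inv_mul_cancel₀ hb0, one_smul])
      have h1 := hstep x y hx hy hxy
      have h2 := hstep y x hy hx hyx
      rw [add_comm] at h2
      exact h1.symm.trans h2
  set x1 : Fin n → ℂ := fun _ => 1 with hx1_def
  have hx1ne : x1 ≠ 0 := by
    intro h0
    have := congrFun h0 ⟨0, hn⟩
    simp [hx1_def] at this
  refine ⟨c x1, hc0 x1, ?_⟩
  have hrank1 : ∀ x : Fin n → ℂ, ψ (vecMulVec x (star x)) =
      (c x1 : ℂ) • (U * (vecMulVec x (star x))ᵀ * Uᴴ) := by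
    intro x
    rw [hconj x]
    by_cases hx : x = 0
    · subst hx
      rw [hvmv0, map_zero]
      have hv0 : v 0 = 0 := by simp [hv_def]
      rw [hv0, hvmv0, smul_zero]
    · rw [hc x, hconst x x1 hx hx1ne]
  set T : Matrix (Fin n) (Fin n) ℂ →ₗ[ℂ] Matrix (Fin n) (Fin n) ℂ :=
    ψ - (c x1 : ℂ) • phiAux n U with hT_def
  have hT0 : ∀ x : Fin n → ℂ, T (vecMulVec x (star x)) = 0 := by
    intro x
    rw [hT_def]
    simp only [LinearMap.sub_apply, LinearMap.smul_apply, phiAux_apply]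
    rw [hrank1 x, sub_self]
  have hTab : ∀ a b : Fin n → ℂ, T (vecMulVec a (star b)) = 0 := by
    have hpol : ∀ a b : Fin n → ℂ,
        T (vecMulVec a (star b)) + T (vecMulVec b (star a)) = 0 := by
      intro a b
      have hexp : vecMulVec (a + b) (star (a + b)) =
          vecMulVec a (star a) + vecMulVec a (star b) + vecMulVec b (star a)
            + vecMulVec b (star b) := by
        ext i j
        simp only [Matrix.add_apply, vecMulVec_apply, Pi.add_apply, Pi.star_apply, star_add]
        ring
      have h0 := hT0 (a + b)
      rw [hexp, map_add, map_add, map_add, hT0 a, hT0 b] at h0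
      simpa using h0
    intro a b
    have h1 := hpol a b
    have h2 := hpol a (Complex.I • b)
    have e1 : vecMulVec a (star (Complex.I • b)) = (-Complex.I) • vecMulVec a (star b) := by
      ext i j
      simp only [vecMulVec_apply, Pi.smul_apply, Pi.star_apply, Matrix.smul_apply, star_smul,
        smul_eq_mul, star_mul', star_star, Complex.star_def, Complex.conj_I, _root_.map_mul]
      ring
    have e2 : vecMulVec (Complex.I • b) (star a) = Complex.I • vecMulVec b (star a) := by
      ext i j
      simp only [vecMulVec_apply, Pi.smul_apply, Matrix.smul_apply, smul_eq_mul]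
      ring
    rw [e1, e2, _root_.map_smul, _root_.map_smul] at h2
    have h3 : T (vecMulVec b (star a)) = T (vecMulVec a (star b)) := by
      have h2' : Complex.I • T (vecMulVec b (star a)) - Complex.I • T (vecMulVec a (star b)) = 0 := by
        rw [sub_eq_neg_add, ← neg_smul]
        exact h2
      have h4 := sub_eq_zero.mp h2'
      have h5 := congrArg (fun M => (Complex.I)⁻¹ • M) h4
      simp only [smul_smul, inv_mul_cancel₀ Complex.I_ne_zero, one_smul] at h5
      exact h5
    rw [h3, ← two_smul ℂ] at h1
    have h6 := congrArg (fun M => ((2 : ℂ)⁻¹) • M) h1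
    simp only [smul_smul, smul_zero] at h6
    rw [inv_mul_cancel₀ (by norm_num : (2 : ℂ) ≠ 0), one_smul] at h6
    exact h6
  intro X
  have hTX : T X = 0 := by
    have hX := matrix_eq_sum_single X
    have hsb : ∀ (i j : Fin n), Matrix.single i j (X i j) =
        (X i j) • vecMulVec (Pi.single i 1) (star (Pi.single j 1)) := by
      intro i j
      have hst : star (Pi.single j (1 : ℂ)) = (Pi.single j 1 : Fin n → ℂ) := by
        funext k
        by_cases hk : k = j <;> simp [Pi.single_apply, hk]
      rw [hst, ← single_eq_single_vecMulVec_single, smul_single,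
        smul_eq_mul, mul_one]
    calc T X = T (∑ i, ∑ j, Matrix.single i j (X i j)) := by rw [← hX]
      _ = 0 := by
        rw [map_sum]
        refine Finset.sum_eq_zero fun i _ => ?_
        rw [map_sum]
        refine Finset.sum_eq_zero fun j _ => ?_
        rw [hsb i j, _root_.map_smul, hTab, smul_zero]
  have := sub_eq_zero.mp (by
    rw [hT_def] at hTX
    simpa only [LinearMap.sub_apply, LinearMap.smul_apply, phiAux_apply] using hTX)
  exact this
end

section
/- Let ψ : M_2(ℂ) → M_2(ℂ) be a linear positive map such that ⟨x, ψ(x x*) x⟩ = 0 for every x ∈ ℂ². Then there exists λ ≥ 0 such that ψ(X) = λ·((Tr X)·I_2 − X) for all X ∈ M_2(ℂ). (That is, the reduction map R_2 on M_2(ℂ) is an exposed positive map.) -/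
open Matrix Complex
open scoped ComplexOrder Kronecker


lemma rankone (x : Fin 2 → ℂ) : (vecMulVec x (star x)).PosSemidef := by
  refine Matrix.PosSemidef.of_dotProduct_mulVec_nonneg ?_ ?_
  · ext i j
    simp [vecMulVec_apply, conjTranspose_apply, mul_comm]
  · intro v
    have h : star v ⬝ᵥ (vecMulVec x (star x)).mulVec v
        = star (star x ⬝ᵥ v) * (star x ⬝ᵥ v) := by
      simp [dotProduct, mulVec, vecMulVec_apply, Fin.sum_univ_two, Pi.star_apply]
      ring
    rw [h]
    exact star_mul_self_nonneg _

lemma quad (M : Matrix (Fin 2) (Fin 2) ℂ) (v : Fin 2 → ℂ) :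
    star v ⬝ᵥ M.mulVec v =
      starRingEnd ℂ (v 0) * (M 0 0 * v 0 + M 0 1 * v 1)
      + starRingEnd ℂ (v 1) * (M 1 0 * v 0 + M 1 1 * v 1) := by
  simp [dotProduct, mulVec, Fin.sum_univ_two, Pi.star_apply]

lemma herm10 {M : Matrix (Fin 2) (Fin 2) ℂ} (h : M.PosSemidef) :
    M 1 0 = starRingEnd ℂ (M 0 1) := by
  have := congrFun (congrFun h.1 1) 0
  simpa [conjTranspose_apply] using this.symm

lemma diag_real {M : Matrix (Fin 2) (Fin 2) ℂ} (h : M.PosSemidef) (i : Fin 2) :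
    M i i = ((M i i).re : ℂ) ∧ 0 ≤ (M i i).re := by
  have h2 := h.dotProduct_mulVec_nonneg (Pi.single i 1)
  have he : star (Pi.single i 1) ⬝ᵥ M.mulVec (Pi.single i 1) = M i i := by
    fin_cases i <;> simp [quad, Pi.single_apply]
  rw [he] at h2
  rw [Complex.le_def] at h2
  constructor
  · exact (Complex.ext (by simp) (by simp [← h2.2])).symm
  · simpa using h2.1

-- off diagonal vanish when diagonal entry zero
lemma offdiag0 {M : Matrix (Fin 2) (Fin 2) ℂ} (h : M.PosSemidef) (h0 : M 0 0 = 0) :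
    M 0 1 = 0 := by
  by_contra hne
  set t : ℝ := -((M 1 1).re + 1) / (2 * Complex.normSq (M 0 1)) with ht
  have h2 := h.dotProduct_mulVec_nonneg ![(t : ℂ) * M 0 1, 1]
  rw [quad] at h2
  have h10 := herm10 h
  have hns : Complex.normSq (M 0 1) ≠ 0 := by simpa [Complex.normSq_eq_zero] using hne
  have hval : starRingEnd ℂ ((![(t:ℂ) * M 0 1, 1] : Fin 2 → ℂ) 0) *
      (M 0 0 * (![(t:ℂ) * M 0 1, 1] 0) + M 0 1 * (![(t:ℂ) * M 0 1, 1] 1))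
      + starRingEnd ℂ ((![(t:ℂ) * M 0 1, 1] : Fin 2 → ℂ) 1) *
      (M 1 0 * (![(t:ℂ) * M 0 1, 1] 0) + M 1 1 * (![(t:ℂ) * M 0 1, 1] 1))
      = ((2 * t * Complex.normSq (M 0 1) : ℝ) : ℂ) + M 1 1 := by
    simp only [Matrix.cons_val_zero, Matrix.cons_val_one, Matrix.head_cons, h0, h10,
      _root_.map_mul, _root_.map_one, Complex.conj_ofReal]
    rw [show ((2 * t * Complex.normSq (M 0 1) : ℝ) : ℂ)
        = 2 * (t:ℂ) * (starRingEnd ℂ (M 0 1) * M 0 1) from by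
      rw [← Complex.normSq_eq_conj_mul_self]; push_cast; ring]
    ring
  rw [hval] at h2
  rw [Complex.le_def] at h2
  have hre := h2.1
  simp only [Complex.add_re, Complex.ofReal_re, Complex.zero_re] at hre
  have htv : (2:ℝ) * t * Complex.normSq (M 0 1) = -((M 1 1).re + 1) := by
    rw [ht]; field_simp
  linarith [hre, htv.ge, htv.le]

lemma offdiag1 {M : Matrix (Fin 2) (Fin 2) ℂ} (h : M.PosSemidef) (h1 : M 1 1 = 0) :
    M 1 0 = 0 := by
  by_contra hne
  set t : ℝ := -((M 0 0).re + 1) / (2 * Complex.normSq (M 1 0)) with ht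
  have h2 := h.dotProduct_mulVec_nonneg ![1, (t : ℂ) * M 1 0]
  rw [quad] at h2
  have h01 : M 0 1 = starRingEnd ℂ (M 1 0) := by
    rw [herm10 h]; simp
  have hns : Complex.normSq (M 1 0) ≠ 0 := by simpa [Complex.normSq_eq_zero] using hne
  have hval : starRingEnd ℂ ((![1, (t:ℂ) * M 1 0] : Fin 2 → ℂ) 0) *
      (M 0 0 * (![1, (t:ℂ) * M 1 0] 0) + M 0 1 * (![1, (t:ℂ) * M 1 0] 1))
      + starRingEnd ℂ ((![1, (t:ℂ) * M 1 0] : Fin 2 → ℂ) 1) *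
      (M 1 0 * (![1, (t:ℂ) * M 1 0] 0) + M 1 1 * (![1, (t:ℂ) * M 1 0] 1))
      = ((2 * t * Complex.normSq (M 1 0) : ℝ) : ℂ) + M 0 0 := by
    simp only [Matrix.cons_val_zero, Matrix.cons_val_one, Matrix.head_cons, h1, h01,
      _root_.map_mul, _root_.map_one, Complex.conj_ofReal]
    rw [show ((2 * t * Complex.normSq (M 1 0) : ℝ) : ℂ)
        = 2 * (t:ℂ) * (starRingEnd ℂ (M 1 0) * M 1 0) from by
      rw [← Complex.normSq_eq_conj_mul_self]; push_cast; ring]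
    ring
  rw [hval] at h2
  rw [Complex.le_def] at h2
  have hre := h2.1
  simp only [Complex.add_re, Complex.ofReal_re, Complex.zero_re] at hre
  have htv : (2:ℝ) * t * Complex.normSq (M 1 0) = -((M 0 0).re + 1) := by
    rw [ht]; field_simp
  linarith [hre, htv.ge, htv.le]

lemma detineq {M : Matrix (Fin 2) (Fin 2) ℂ} (h : M.PosSemidef) :
    Complex.normSq (M 0 1) ≤ (M 0 0).re * (M 1 1).re := by
  by_cases h00 : M 0 0 = 0
  · rw [offdiag0 h h00]
    have : (M 0 0).re = 0 := by rw [h00]; simp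
    simp [this]
  · set r : ℝ := (M 0 0).re with hr
    set u : ℝ := (M 1 1).re with hu
    have hM00 : M 0 0 = (r : ℂ) := (diag_real h 0).1
    have hM11 : M 1 1 = (u : ℂ) := (diag_real h 1).1
    have hrpos : 0 < r := by
      rcases lt_or_eq_of_le (diag_real h 0).2 with hlt | heq
      · exact hlt
      · exfalso; apply h00; rw [hM00, hr, ← heq]; simp
    have h2 := h.dotProduct_mulVec_nonneg ![-(M 0 1), (r : ℂ)]
    rw [quad] at h2
    have h10 := herm10 h
    have hval : starRingEnd ℂ ((![-(M 0 1), (r:ℂ)] : Fin 2 → ℂ) 0) *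
        (M 0 0 * (![-(M 0 1), (r:ℂ)] 0) + M 0 1 * (![-(M 0 1), (r:ℂ)] 1))
        + starRingEnd ℂ ((![-(M 0 1), (r:ℂ)] : Fin 2 → ℂ) 1) *
        (M 1 0 * (![-(M 0 1), (r:ℂ)] 0) + M 1 1 * (![-(M 0 1), (r:ℂ)] 1))
        = ((r * (r * u - Complex.normSq (M 0 1)) : ℝ) : ℂ) := by
      simp only [Matrix.cons_val_zero, Matrix.cons_val_one, Matrix.head_cons, hM00, hM11, h10,
        map_neg, Complex.conj_ofReal]
      rw [show ((r * (r * u - Complex.normSq (M 0 1)) : ℝ) : ℂ)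
          = (r:ℂ) * ((r:ℂ) * (u:ℂ) - starRingEnd ℂ (M 0 1) * M 0 1) from by
        rw [← Complex.normSq_eq_conj_mul_self]; push_cast; ring]
      ring
    rw [hval, Complex.le_def] at h2
    have hre := h2.1
    simp only [Complex.ofReal_re, Complex.zero_re] at hre
    nlinarith [hre, hrpos]

set_option maxHeartbeats 1000000 in
/-- The reduction map `R_2(X) = (Tr X)·I − X` on `M_2(ℂ)` is exposed: any linear
positive map `ψ` with `⟨x, ψ(x x*) x⟩ = 0` for all `x ∈ ℂ²` is a nonnegative
multiple of `R_2`. -/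
theorem reduction_two_exposed
    (ψ : Matrix (Fin 2) (Fin 2) ℂ →ₗ[ℂ] Matrix (Fin 2) (Fin 2) ℂ)
    (hpos : ∀ X, X.PosSemidef → (ψ X).PosSemidef)
    (hvan : ∀ x : Fin 2 → ℂ, star x ⬝ᵥ (ψ (vecMulVec x (star x))).mulVec x = 0) :
    ∃ lam : ℝ, 0 ≤ lam ∧ ∀ X, ψ X = (lam : ℂ) •
      (X.trace • (1 : Matrix (Fin 2) (Fin 2) ℂ) - X) := by
  have hI2 : Complex.I^2 = -1 := Complex.I_sq
  have hI3 : Complex.I^3 = -Complex.I := by rw [pow_succ, Complex.I_sq]; ring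
  have hI4 : Complex.I^4 = 1 := by rw [show (4:ℕ) = 2*2 from rfl, pow_mul, hI2]; norm_num
  have hdec : ∀ s : ℂ, vecMulVec ![s,1] (star ![s,1])
      = (s * starRingEnd ℂ s) • !![1,0;0,0] + s • !![0,1;0,0]
        + (starRingEnd ℂ s) • !![0,0;1,0] + !![0,0;0,1] := by
    intro s
    ext i j
    fin_cases i <;> fin_cases j <;>
      simp [vecMulVec_apply, Matrix.add_apply, Matrix.smul_apply, smul_eq_mul]
  have hE00 : vecMulVec ![(1:ℂ),0] (star ![(1:ℂ),0]) = !![1,0;0,0] := by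
    ext i j
    fin_cases i <;> fin_cases j <;> simp [vecMulVec_apply]
  have hE11 : vecMulVec ![(0:ℂ),1] (star ![(0:ℂ),1]) = !![0,0;0,1] := by
    ext i j
    fin_cases i <;> fin_cases j <;> simp [vecMulVec_apply]
  have hApsd : (ψ !![1,0;0,0]).PosSemidef := by
    have := hpos _ (rankone ![(1:ℂ),0])
    rwa [hE00] at this
  have hBpsd : (ψ !![0,0;0,1]).PosSemidef := by
    have := hpos _ (rankone ![(0:ℂ),1])
    rwa [hE11] at this
  have ha00 : (ψ !![1,0;0,0]) 0 0 = 0 := by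
    have h := hvan ![(1:ℂ),0]
    rw [hE00, quad] at h
    simpa using h
  have hb11 : (ψ !![0,0;0,1]) 1 1 = 0 := by
    have h := hvan ![(0:ℂ),1]
    rw [hE11, quad] at h
    simpa using h
  have ha01 : (ψ !![1,0;0,0]) 0 1 = 0 := offdiag0 hApsd ha00
  have ha10 : (ψ !![1,0;0,0]) 1 0 = 0 := by rw [herm10 hApsd, ha01]; simp
  have hb10 : (ψ !![0,0;0,1]) 1 0 = 0 := offdiag1 hBpsd hb11
  have hb01 : (ψ !![0,0;0,1]) 0 1 = 0 := by
    have h := (herm10 hBpsd).symm.trans hb10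
    simpa using congrArg (starRingEnd ℂ) h
  have hx : ∀ s : ℂ, s * (starRingEnd ℂ s) * (s * (starRingEnd ℂ s) * (ψ !![1,0;0,0]) 0 0 + s * (ψ !![0,1;0,0]) 0 0 + (starRingEnd ℂ s) * (ψ !![0,0;1,0]) 0 0 + (ψ !![0,0;0,1]) 0 0) + (starRingEnd ℂ s) * (s * (starRingEnd ℂ s) * (ψ !![1,0;0,0]) 0 1 + s * (ψ !![0,1;0,0]) 0 1 + (starRingEnd ℂ s) * (ψ !![0,0;1,0]) 0 1 + (ψ !![0,0;0,1]) 0 1) + s * (s * (starRingEnd ℂ s) * (ψ !![1,0;0,0]) 1 0 + s * (ψ !![0,1;0,0]) 1 0 + (starRingEnd ℂ s) * (ψ !![0,0;1,0]) 1 0 + (ψ !![0,0;0,1]) 1 0) + (s * (starRingEnd ℂ s) * (ψ !![1,0;0,0]) 1 1 + s * (ψ !![0,1;0,0]) 1 1 + (starRingEnd ℂ s) * (ψ !![0,0;1,0]) 1 1 + (ψ !![0,0;0,1]) 1 1) = 0 := by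
    intro s
    have h := hvan ![s,1]
    rw [hdec s] at h
    rw [_root_.map_add, _root_.map_add, _root_.map_add] at h
    rw [_root_.map_smul, _root_.map_smul, _root_.map_smul] at h
    rw [quad] at h
    simp only [Matrix.add_apply, Matrix.smul_apply, smul_eq_mul, Matrix.cons_val_zero,
      Matrix.cons_val_one, Matrix.head_cons, _root_.map_one] at h
    linear_combination h
  have h1 := hx 1
  have h2 := hx (-1)
  have h3 := hx Complex.I
  have h4 := hx (-Complex.I)
  have h5 := hx 2
  have h6 := hx (2*Complex.I)
  have h7 := hx (1+Complex.I)
  simp only [ha00, ha01, ha10, hb01, hb10, hb11, _root_.map_add, _root_.map_mul, map_neg,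
    _root_.map_one, map_ofNat, Complex.conj_I, mul_zero, zero_mul, add_zero, zero_add,
    mul_one, one_mul, mul_neg, neg_mul, neg_neg] at h1 h2 h3 h4 h5 h6 h7
  have hc00 : (ψ !![0,1;0,0]) 0 0 = 0 := by
    linear_combination (norm := (ring_nf; simp only [hI2, hI3, hI4]; try ring1; try ring_nf)) (-1/4 : ℂ)*h1 + (-1/12 : ℂ)*h2 + (Complex.I/4)*h3 + (Complex.I/12)*h4
      + (1/12 : ℂ)*h5 + (-Complex.I/12)*h6
  have hd00 : (ψ !![0,0;1,0]) 0 0 = 0 := by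
    linear_combination (norm := (ring_nf; simp only [hI2, hI3, hI4]; try ring1; try ring_nf)) (-1/4 : ℂ)*h1 + (-1/12 : ℂ)*h2 + (-Complex.I/4)*h3 + (-Complex.I/12)*h4
      + (1/12 : ℂ)*h5 + (Complex.I/12)*h6
  have hu3 : (ψ !![0,0;0,1]) 0 0 + (ψ !![0,1;0,0]) 0 1 + (ψ !![0,0;1,0]) 1 0 + (ψ !![1,0;0,0]) 1 1 = 0 := by
    linear_combination (norm := (ring_nf; simp only [hI2, hI3, hI4]; try ring1; try ring_nf)) (1/4 : ℂ)*h1 + (1/4 : ℂ)*h2 + (1/4 : ℂ)*h3 + (1/4 : ℂ)*h4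
  have hd01 : (ψ !![0,0;1,0]) 0 1 = 0 := by
    linear_combination (norm := (ring_nf; simp only [hI2, hI3, hI4]; try ring1; try ring_nf)) (1/8 - Complex.I/8)*h1 + (1/8 + Complex.I/24)*h2
      + (-1/8 - Complex.I/8)*h3 + (-1/8 + Complex.I/24)*h4 + (-Complex.I/24)*h5
      + (-Complex.I/24)*h6 + (Complex.I/4)*h7
  have hc10 : (ψ !![0,1;0,0]) 1 0 = 0 := by
    linear_combination (norm := (ring_nf; simp only [hI2, hI3, hI4]; try ring1; try ring_nf)) (1/8 + Complex.I/8)*h1 + (1/8 - Complex.I/24)*h2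
      + (-1/8 + Complex.I/8)*h3 + (-1/8 - Complex.I/24)*h4 + (Complex.I/24)*h5
      + (Complex.I/24)*h6 + (-Complex.I/4)*h7
  have hc11 : (ψ !![0,1;0,0]) 1 1 = 0 := by
    linear_combination (norm := (ring_nf; simp only [hI2, hI3, hI4]; try ring1; try ring_nf)) (1/2 : ℂ)*h1 + (-1/6 : ℂ)*h2 + (-Complex.I/2)*h3 + (Complex.I/6)*h4
      + (-1/12 : ℂ)*h5 + (Complex.I/12)*h6
  have hd11 : (ψ !![0,0;1,0]) 1 1 = 0 := by
    linear_combination (norm := (ring_nf; simp only [hI2, hI3, hI4]; try ring1; try ring_nf)) (1/2 : ℂ)*h1 + (-1/6 : ℂ)*h2 + (Complex.I/2)*h3 + (-Complex.I/6)*h4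
      + (-1/12 : ℂ)*h5 + (-Complex.I/12)*h6
  -- the matrix ψ applied to the rank-one projection of ![1,1]
  have hNpsd := hpos _ (rankone ![(1:ℂ),1])
  have hN : ψ (vecMulVec ![(1:ℂ),1] (star ![(1:ℂ),1]))
      = (ψ !![1,0;0,0]) + (ψ !![0,1;0,0]) + (ψ !![0,0;1,0]) + (ψ !![0,0;0,1]) := by
    rw [hdec 1]
    rw [_root_.map_add, _root_.map_add, _root_.map_add]
    rw [_root_.map_smul, _root_.map_smul, _root_.map_smul]
    norm_num
  rw [hN] at hNpsd
  have hherm := herm10 hNpsd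
  have hdet := detineq hNpsd
  simp only [Matrix.add_apply, ha01, hb01, hd01, ha00, hc00, hd00, hb11, hc11, hd11,
    ha10, hb10, hc10, add_zero, zero_add] at hherm hdet
  -- real unknowns
  set al : ℝ := ((ψ !![1,0;0,0]) 1 1).re with hal
  set be : ℝ := ((ψ !![0,0;0,1]) 0 0).re with hbe
  have hA11 : (ψ !![1,0;0,0]) 1 1 = (al : ℂ) := (diag_real hApsd 1).1
  have hB00 : (ψ !![0,0;0,1]) 0 0 = (be : ℂ) := (diag_real hBpsd 0).1
  have halnn : 0 ≤ al := (diag_real hApsd 1).2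
  have hbenn : 0 ≤ be := (diag_real hBpsd 0).2
  have hre : be + ((ψ !![0,1;0,0]) 0 1).re + ((ψ !![0,1;0,0]) 0 1).re + al = 0 := by
    have h := hu3
    rw [hherm, hA11, hB00] at h
    have h2 := congrArg Complex.re h
    simp only [Complex.add_re, Complex.conj_re, Complex.ofReal_re, Complex.zero_re] at h2
    linarith [h2]
  have hns : ((ψ !![0,1;0,0]) 0 1).re ^ 2 + ((ψ !![0,1;0,0]) 0 1).im ^ 2 ≤ be * al := by
    simpa [Complex.normSq_apply, pow_two] using hdet
  have habe : al = be := by nlinarith [sq_nonneg (al - be), sq_nonneg (((ψ !![0,1;0,0]) 0 1).im)]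
  have hcim : ((ψ !![0,1;0,0]) 0 1).im = 0 := by nlinarith [sq_nonneg (al - be)]
  have hcre : ((ψ !![0,1;0,0]) 0 1).re = -al := by nlinarith
  have hC01 : (ψ !![0,1;0,0]) 0 1 = (-al : ℝ) := by
    apply Complex.ext <;> simp [hcre, hcim]
  have hD10 : (ψ !![0,0;1,0]) 1 0 = (-al : ℝ) := by
    rw [hherm, hC01]
    simp
  refine ⟨al, halnn, fun X => ?_⟩
  have hXdec : X = X 0 0 • !![1,0;0,0] + X 0 1 • !![0,1;0,0]
      + X 1 0 • !![0,0;1,0] + X 1 1 • !![0,0;0,1] := by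
    ext i j
    fin_cases i <;> fin_cases j <;>
      simp [Matrix.add_apply, Matrix.smul_apply, smul_eq_mul]
  have hB00a : ψ !![0,0;0,1] 0 0 = ((al : ℝ) : ℂ) := by rw [hB00, habe]
  conv_lhs => rw [hXdec]
  rw [_root_.map_add, _root_.map_add, _root_.map_add]
  rw [_root_.map_smul, _root_.map_smul, _root_.map_smul, _root_.map_smul]
  ext i j
  fin_cases i <;> fin_cases j <;>
    simp [Matrix.add_apply, Matrix.smul_apply, Matrix.sub_apply, Matrix.one_fin_two,
      Matrix.trace_fin_two, smul_eq_mul, ha00, ha01, ha10, hA11,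
      hb01, hb10, hb11, hB00a, hc00, hc10, hc11, hC01, hd00, hd01, hd11, hD10] <;>
    ring
end

section
/- Let n ≥ 2 and let U ∈ M_{2n}(ℂ) be unitary and antisymmetric (Uᵀ = −U). Define φ_U(X) = (Tr X)·I_{2n} − X − U Xᵀ U* and φ^U(X) = U Xᵀ U*. Then the reduction map R_{2n}(X) = (Tr X)·I_{2n} − X satisfies R_{2n} = φ_U + φ^U, both φ_U and φ^U are positive maps, and neither φ_U nor φ^U is a scalar multiple of R_{2n}. In particular R_{2n} is not an extreme ray of the cone of positive maps: it is a sum of two positive maps neither of which is proportional to it. -/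
open Matrix
open scoped ComplexOrder Kronecker

private lemma bessel_two {m : Type*} [Fintype m] (b y w : m → ℂ)
    (hyw : star y ⬝ᵥ w = 0) (hN : star y ⬝ᵥ y = star w ⬝ᵥ w) :
    (star y ⬝ᵥ b) * (star b ⬝ᵥ y) + (star w ⬝ᵥ b) * (star b ⬝ᵥ w)
      ≤ (star y ⬝ᵥ y) * (star b ⬝ᵥ b) := by
  by_cases hy : y = 0
  · subst hy
    have hw : w = 0 := by
      rw [← dotProduct_star_self_eq_zero (v := w), ← hN]
      simp
    subst hw; simp
  · set N : ℂ := star y ⬝ᵥ y with hNdef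
    have hNpos : 0 < N := Matrix.dotProduct_star_self_pos_iff.mpr hy
    set c1 : ℂ := star y ⬝ᵥ b with hc1
    set c2 : ℂ := star w ⬝ᵥ b with hc2
    have hstarN : star N = N := (star_dotProduct y y).symm
    have hby : star b ⬝ᵥ y = star c1 := star_dotProduct b y
    have hbw : star b ⬝ᵥ w = star c2 := star_dotProduct b w
    have hwy : star w ⬝ᵥ y = 0 := by rw [star_dotProduct, hyw, star_zero]
    have key : star (N • b - c1 • y - c2 • w) ⬝ᵥ (N • b - c1 • y - c2 • w)
        = N * (N * (star b ⬝ᵥ b) - (c1 * star c1 + c2 * star c2)) := by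
      simp only [star_sub, star_smul, sub_dotProduct, dotProduct_sub,
        smul_dotProduct, dotProduct_smul, smul_eq_mul]
      rw [hby, hbw, hwy, hyw, ← hNdef, ← hc1, ← hc2, ← hN, hstarN]
      ring
    have H : (0:ℂ) ≤ N * (N * (star b ⬝ᵥ b) - (c1 * star c1 + c2 * star c2)) := by
      rw [← key]; exact dotProduct_star_self_nonneg _
    have hinv : (0:ℂ) ≤ N⁻¹ := by
      have him : N.im = 0 := ((Complex.lt_def.mp hNpos).2).symm
      have hre : 0 < N.re := by simpa using (Complex.lt_def.mp hNpos).1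
      have h1 : N = (N.re : ℂ) := Complex.ext rfl (by simp [him])
      rw [h1, ← Complex.ofReal_inv]
      exact_mod_cast Complex.real_le_real.mpr (by positivity) |>.trans_eq rfl
    have H2 : (0:ℂ) ≤ N * (star b ⬝ᵥ b) - (c1 * star c1 + c2 * star c2) := by
      have h4 := mul_nonneg hinv H
      rwa [← mul_assoc, inv_mul_cancel₀ (ne_of_gt hNpos), one_mul] at h4
    have h3 := sub_nonneg.mp H2
    rw [hby, hbw]
    exact h3

private lemma trace_ineq {m : Type*} [Fintype m] [DecidableEq m] {X : Matrix m m ℂ}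
    (hX : X.PosSemidef) (y w : m → ℂ)
    (hyw : star y ⬝ᵥ w = 0) (hN : star y ⬝ᵥ y = star w ⬝ᵥ w) :
    star y ⬝ᵥ (X *ᵥ y) + star w ⬝ᵥ (X *ᵥ w) ≤ X.trace * (star y ⬝ᵥ y) := by
  open scoped MatrixOrder in
  set S := CFC.sqrt X with hSdef
  have hS : Sᴴ = S := (CFC.sqrt_nonneg X).posSemidef.1
  have hSS : S * S = X := CFC.sqrt_mul_sqrt_self X hX.nonneg
  have hsym : ∀ i j, S j i = star (S i j) := by
    intro i j
    conv_lhs => rw [← hS]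
    rw [conjTranspose_apply]
  have decomp : ∀ z : m → ℂ, star z ⬝ᵥ (X *ᵥ z)
      = ∑ i, (star z ⬝ᵥ star (S i)) * (star (star (S i)) ⬝ᵥ z) := by
    intro z
    have h1 : star z ᵥ* S = star (S *ᵥ z) := by rw [star_mulVec, hS]
    rw [← hSS, ← mulVec_mulVec, dotProduct_mulVec, h1]
    refine Finset.sum_congr rfl fun i _ => ?_
    have e1 : (S *ᵥ z) i = star (star (S i)) ⬝ᵥ z := by rw [star_star]; rfl
    have e2 : star ((S *ᵥ z) i) = star z ⬝ᵥ star (S i) := by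
      rw [e1, star_star, star_dotProduct_star]
    rw [Pi.star_apply, e2, e1]
  have htr : X.trace = ∑ i, star (star (S i)) ⬝ᵥ star (S i) := by
    rw [← hSS, Matrix.trace]
    refine Finset.sum_congr rfl fun i _ => ?_
    rw [Matrix.diag_apply, Matrix.mul_apply]
    refine Finset.sum_congr rfl fun j _ => ?_
    rw [hsym i j, star_star]
    rfl
  rw [decomp y, decomp w, htr, Finset.sum_mul, ← Finset.sum_add_distrib]
  refine Finset.sum_le_sum fun i _ => ?_
  rw [mul_comm (star (star (S i)) ⬝ᵥ star (S i))]
  exact bessel_two (star (S i)) y w hyw hN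

private lemma phiU_posSemidef {m : Type*} [Fintype m] [DecidableEq m]
    (U X : Matrix m m ℂ) (hU : U * Uᴴ = 1) (hanti : Uᵀ = -U) (hX : X.PosSemidef) :
    (X.trace • (1 : Matrix m m ℂ) - X - U * Xᵀ * Uᴴ).PosSemidef := by
  have hXh : Xᴴ = X := hX.1
  have hUHt : (Uᴴ)ᵀ = -Uᴴ := by
    have : (Uᵀ)ᴴ = (-U)ᴴ := by rw [hanti]
    rw [conjTranspose_neg] at this
    rw [← this]
    ext i j
    simp [conjTranspose_apply, transpose_apply]
  refine posSemidef_iff_dotProduct_mulVec.mpr ⟨?_, ?_⟩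
  · -- Hermitian
    have htr : star X.trace = X.trace := by
      rw [← Matrix.trace_conjTranspose, hXh]
    have hXth : (Xᵀ)ᴴ = Xᵀ := by
      ext i j
      simp only [conjTranspose_apply, transpose_apply]
      rw [← conjTranspose_apply, hXh]
    show _ᴴ = _
    rw [conjTranspose_sub, conjTranspose_sub, conjTranspose_smul, conjTranspose_one,
      htr, hXh, conjTranspose_mul, conjTranspose_mul, conjTranspose_conjTranspose,
      hXth, Matrix.mul_assoc]
  · intro x
    set w : m → ℂ := U *ᵥ star x with hw
    have horth : star x ⬝ᵥ w = 0 := by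
      have h2 : star x ⬝ᵥ (U *ᵥ star x) = -(star x ⬝ᵥ (U *ᵥ star x)) := by
        calc star x ⬝ᵥ (U *ᵥ star x) = (star x ᵥ* U) ⬝ᵥ star x := dotProduct_mulVec _ _ _
          _ = star x ⬝ᵥ (star x ᵥ* U) := dotProduct_comm _ _
          _ = star x ⬝ᵥ (Uᵀ *ᵥ star x) := by rw [mulVec_transpose]
          _ = star x ⬝ᵥ ((-U) *ᵥ star x) := by rw [hanti]
          _ = -(star x ⬝ᵥ (U *ᵥ star x)) := by rw [neg_mulVec, dotProduct_neg]
      have h3 : (2:ℂ) * (star x ⬝ᵥ (U *ᵥ star x)) = 0 := by linear_combination h2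
      have := (mul_eq_zero.mp h3).resolve_left two_ne_zero
      rw [hw]; exact this
    have hsw : star w = x ᵥ* Uᴴ := by rw [hw, star_mulVec, star_star]
    have hnorm : star x ⬝ᵥ x = star w ⬝ᵥ w := by
      have hUU : Uᴴ * U = 1 := mul_eq_one_comm.mp hU
      calc star x ⬝ᵥ x = x ⬝ᵥ star x := dotProduct_comm _ _
        _ = (x ᵥ* 1) ⬝ᵥ star x := by rw [vecMul_one]
        _ = (x ᵥ* (Uᴴ * U)) ⬝ᵥ star x := by rw [hUU]
        _ = ((x ᵥ* Uᴴ) ᵥ* U) ⬝ᵥ star x := by rw [vecMul_vecMul]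
        _ = (x ᵥ* Uᴴ) ⬝ᵥ (U *ᵥ star x) := (dotProduct_mulVec _ _ _).symm
        _ = star w ⬝ᵥ w := by rw [hsw, hw]
    have hT3 : star x ⬝ᵥ ((U * Xᵀ * Uᴴ) *ᵥ x) = star w ⬝ᵥ (X *ᵥ w) := by
      have hMt : (Uᴴ * X * U)ᵀ = U * Xᵀ * Uᴴ := by
        rw [transpose_mul, transpose_mul, hanti, hUHt]
        simp [Matrix.mul_assoc]
      have step1 : star x ⬝ᵥ ((U * Xᵀ * Uᴴ) *ᵥ x) = x ⬝ᵥ ((Uᴴ * X * U) *ᵥ star x) := by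
        calc star x ⬝ᵥ ((U * Xᵀ * Uᴴ) *ᵥ x) = star x ⬝ᵥ ((Uᴴ * X * U)ᵀ *ᵥ x) := by rw [hMt]
          _ = star x ⬝ᵥ (x ᵥ* (Uᴴ * X * U)) := by rw [mulVec_transpose]
          _ = (x ᵥ* (Uᴴ * X * U)) ⬝ᵥ star x := dotProduct_comm _ _
          _ = x ⬝ᵥ ((Uᴴ * X * U) *ᵥ star x) := (dotProduct_mulVec _ _ _).symm
      have step2 : star (star w ⬝ᵥ (X *ᵥ w)) = x ⬝ᵥ ((Uᴴ * X * U) *ᵥ star x) := by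
        calc star (star w ⬝ᵥ (X *ᵥ w)) = star (X *ᵥ w) ⬝ᵥ w := (star_dotProduct _ _).symm
          _ = (star w ᵥ* Xᴴ) ⬝ᵥ w := by rw [star_mulVec]
          _ = ((x ᵥ* Uᴴ) ᵥ* X) ⬝ᵥ (U *ᵥ star x) := by rw [hXh, hsw, hw]
          _ = (x ᵥ* (Uᴴ * X)) ⬝ᵥ (U *ᵥ star x) := by rw [vecMul_vecMul]
          _ = x ⬝ᵥ ((Uᴴ * X) *ᵥ (U *ᵥ star x)) := (dotProduct_mulVec _ _ _).symm
          _ = x ⬝ᵥ ((Uᴴ * X * U) *ᵥ star x) := by rw [mulVec_mulVec]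
      have hreal : star (star w ⬝ᵥ (X *ᵥ w)) = star w ⬝ᵥ (X *ᵥ w) := by
        have h0 := hX.dotProduct_mulVec_nonneg w
        rw [Complex.le_def] at h0
        apply Complex.ext
        · simp [Complex.star_def]
        · simp [Complex.star_def, ← h0.2]
      rw [step1, ← step2, hreal]
    have hform : star x ⬝ᵥ ((X.trace • (1 : Matrix m m ℂ) - X - U * Xᵀ * Uᴴ) *ᵥ x)
        = X.trace * (star x ⬝ᵥ x)
          - (star x ⬝ᵥ (X *ᵥ x) + star x ⬝ᵥ ((U * Xᵀ * Uᴴ) *ᵥ x)) := by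
      rw [sub_mulVec, sub_mulVec, smul_mulVec, one_mulVec,
        dotProduct_sub, dotProduct_sub, dotProduct_smul, smul_eq_mul]
      ring
    rw [hform, hT3, sub_nonneg]
    exact trace_ineq hX x w horth hnorm


/-- For `U ∈ M_{2n}(ℂ)` unitary and antisymmetric, the reduction map
`R_{2n} = φ_U + φ^U` decomposes into the two positive maps
`φ_U(X) = (Tr X)·I − X − U Xᵀ U*` and `φ^U(X) = U Xᵀ U*`, neither of which is a
scalar multiple of `R_{2n}`; hence `R_{2n}` is not an extreme ray of the cone of
positive maps. -/
theorem reduction_not_extreme (n : ℕ) (hn : 2 ≤ n)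
    (U : Matrix (Fin (2 * n)) (Fin (2 * n)) ℂ)
    (hU : U * Uᴴ = 1) (hanti : Uᵀ = -U) :
    (∀ X : Matrix (Fin (2 * n)) (Fin (2 * n)) ℂ,
      X.trace • (1 : Matrix (Fin (2 * n)) (Fin (2 * n)) ℂ) - X =
        (X.trace • (1 : Matrix (Fin (2 * n)) (Fin (2 * n)) ℂ) - X - U * Xᵀ * Uᴴ)
          + U * Xᵀ * Uᴴ) ∧
    (∀ X : Matrix (Fin (2 * n)) (Fin (2 * n)) ℂ, X.PosSemidef →
      (X.trace • (1 : Matrix (Fin (2 * n)) (Fin (2 * n)) ℂ) - X - U * Xᵀ * Uᴴ).PosSemidef) ∧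
    (∀ X : Matrix (Fin (2 * n)) (Fin (2 * n)) ℂ, X.PosSemidef →
      (U * Xᵀ * Uᴴ).PosSemidef) ∧
    (¬ ∃ c : ℂ, ∀ X : Matrix (Fin (2 * n)) (Fin (2 * n)) ℂ,
      X.trace • (1 : Matrix (Fin (2 * n)) (Fin (2 * n)) ℂ) - X - U * Xᵀ * Uᴴ =
        c • (X.trace • (1 : Matrix (Fin (2 * n)) (Fin (2 * n)) ℂ) - X)) ∧
    (¬ ∃ c : ℂ, ∀ X : Matrix (Fin (2 * n)) (Fin (2 * n)) ℂ,
      U * Xᵀ * Uᴴ = c • (X.trace • (1 : Matrix (Fin (2 * n)) (Fin (2 * n)) ℂ) - X)) := by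
  have h4 : 4 ≤ 2 * n := by omega
  set i0 : Fin (2 * n) := ⟨0, by omega⟩ with hi0
  set i1 : Fin (2 * n) := ⟨1, by omega⟩ with hi1
  set i2 : Fin (2 * n) := ⟨2, by omega⟩ with hi2
  have h01 : i1 ≠ i0 := by simp [hi0, hi1, Fin.ext_iff]
  have h20 : i2 ≠ i0 := by simp [hi0, hi2, Fin.ext_iff]
  have h12 : i1 ≠ i2 := by simp [hi1, hi2, Fin.ext_iff]
  set E : Matrix (Fin (2 * n)) (Fin (2 * n)) ℂ := Matrix.single i0 i0 1 with hE
  have hEt : Eᵀ = E := by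
    ext i j
    simp [hE, Matrix.single, transpose_apply, and_comm]
  have hEtr : E.trace = 1 := Matrix.trace_single_eq_same i0 (1:ℂ)
  have hUE : ∀ i j, (U * E * Uᴴ) i j = U i i0 * star (U j i0) := by
    intro i j
    rw [hE, Matrix.mul_apply]
    rw [Finset.sum_eq_single i0]
    · rw [Matrix.mul_single_apply_same, Matrix.conjTranspose_apply, mul_one]
    · intro b _ hb
      rw [Matrix.mul_single_apply_of_ne _ _ _ _ _ hb, zero_mul]
    · intro hi; exact absurd (Finset.mem_univ i0) hi
  have hcard : ((Fintype.card (Fin (2*n)) : ℂ)) = (2*n : ℕ) := by simp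
  have htr1 : (1 : Matrix (Fin (2*n)) (Fin (2*n)) ℂ).trace = ((2*n : ℕ) : ℂ) := by
    rw [Matrix.trace_one]; simp
  refine ⟨fun X => (sub_add_cancel _ _).symm, fun X hX => phiU_posSemidef U X hU hanti hX,
    fun X hX => (hX.transpose).mul_mul_conjTranspose_same U, ?_, ?_⟩
  · rintro ⟨c, h⟩
    have h1 := h 1
    rw [transpose_one, Matrix.mul_one, hU, htr1] at h1
    have e0 : ((2*n : ℕ) : ℂ) - 1 - 1 = c * (((2*n : ℕ) : ℂ) - 1) := by
      have := Matrix.ext_iff.mpr h1 i0 i0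
      simpa [Matrix.sub_apply, Matrix.smul_apply, Matrix.one_apply, smul_eq_mul] using this
    have h2 := h E
    rw [hEt, hEtr] at h2
    have hEvane : ∀ (i j : Fin (2*n)), i ≠ i0 → E i j = 0 := by
      intro i j hi
      rw [hE]
      exact Matrix.single_apply_of_row_ne (Ne.symm hi) _ _ _
    have f12 : U i1 i0 * star (U i2 i0) = 0 := by
      have hthis := Matrix.ext_iff.mpr h2 i1 i2
      simp only [Matrix.sub_apply, Matrix.smul_apply, Matrix.one_apply, smul_eq_mul] at hthis
      rw [hUE, hEvane i1 i2 h01] at hthis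
      simpa [h12] using hthis
    have f11 : 1 - U i1 i0 * star (U i1 i0) = c := by
      have hthis := Matrix.ext_iff.mpr h2 i1 i1
      simp only [Matrix.sub_apply, Matrix.smul_apply, Matrix.one_apply, smul_eq_mul] at hthis
      rw [hUE, hEvane i1 i1 h01] at hthis
      simpa using hthis
    have f22 : 1 - U i2 i0 * star (U i2 i0) = c := by
      have hthis := Matrix.ext_iff.mpr h2 i2 i2
      simp only [Matrix.sub_apply, Matrix.smul_apply, Matrix.one_apply, smul_eq_mul] at hthis
      rw [hUE, hEvane i2 i2 h20] at hthis
      simpa using hthis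
    have f21 : U i2 i0 * star (U i1 i0) = 0 := by
      have hthis := Matrix.ext_iff.mpr h2 i2 i1
      simp only [Matrix.sub_apply, Matrix.smul_apply, Matrix.one_apply, smul_eq_mul] at hthis
      rw [hUE, hEvane i2 i1 h20] at hthis
      simpa [Ne.symm h12] using hthis
    have hu1 : U i1 i0 * star (U i1 i0) = 1 - c := by linear_combination -f11
    have hu2 : U i2 i0 * star (U i2 i0) = 1 - c := by linear_combination -f22
    have hc1 : (1 - c) * (1 - c) = 0 := by
      calc (1-c)*(1-c) = (U i1 i0 * star (U i1 i0)) * (U i2 i0 * star (U i2 i0)) := by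
            rw [hu1, hu2]
        _ = (U i1 i0 * star (U i2 i0)) * (U i2 i0 * star (U i1 i0)) := by ring
        _ = 0 := by rw [f12, zero_mul]
    have hc : c = 1 := by
      rcases mul_eq_zero.mp hc1 with hh | hh <;>
        · have : c = 1 := by linear_combination -hh
          exact this
    rw [hc, one_mul] at e0
    have : (1:ℂ) = 2 := by linear_combination e0
    norm_num at this
  · rintro ⟨c, h⟩
    have h1 := h 1
    rw [transpose_one, Matrix.mul_one, hU, htr1] at h1
    have e0 : (1:ℂ) = c * (((2*n : ℕ) : ℂ) - 1) := by
      have := Matrix.ext_iff.mpr h1 i0 i0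
      simpa [Matrix.sub_apply, Matrix.smul_apply, Matrix.one_apply, smul_eq_mul] using this
    have h2 := h E
    rw [hEt, hEtr] at h2
    have hEvane : ∀ (i j : Fin (2*n)), i ≠ i0 → E i j = 0 := by
      intro i j hi
      rw [hE]
      exact Matrix.single_apply_of_row_ne (Ne.symm hi) _ _ _
    have f12 : U i1 i0 * star (U i2 i0) = 0 := by
      have hthis := Matrix.ext_iff.mpr h2 i1 i2
      rw [hUE] at hthis
      simp only [Matrix.sub_apply, Matrix.smul_apply, Matrix.one_apply, smul_eq_mul] at hthis
      rw [hEvane i1 i2 h01] at hthis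
      simpa [h12] using hthis
    have f11 : U i1 i0 * star (U i1 i0) = c := by
      have hthis := Matrix.ext_iff.mpr h2 i1 i1
      rw [hUE] at hthis
      simp only [Matrix.sub_apply, Matrix.smul_apply, Matrix.one_apply, smul_eq_mul] at hthis
      rw [hEvane i1 i1 h01] at hthis
      simpa using hthis
    have f21 : U i2 i0 * star (U i1 i0) = 0 := by
      have hthis := Matrix.ext_iff.mpr h2 i2 i1
      rw [hUE] at hthis
      simp only [Matrix.sub_apply, Matrix.smul_apply, Matrix.one_apply, smul_eq_mul] at hthis
      rw [hEvane i2 i1 h20] at hthis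
      simpa [Ne.symm h12] using hthis
    have f22 : U i2 i0 * star (U i2 i0) = c := by
      have hthis := Matrix.ext_iff.mpr h2 i2 i2
      rw [hUE] at hthis
      simp only [Matrix.sub_apply, Matrix.smul_apply, Matrix.one_apply, smul_eq_mul] at hthis
      rw [hEvane i2 i2 h20] at hthis
      simpa using hthis
    have hc1 : c * c = 0 := by
      calc c*c = (U i1 i0 * star (U i1 i0)) * (U i2 i0 * star (U i2 i0)) := by rw [f11, f22]
        _ = (U i1 i0 * star (U i2 i0)) * (U i2 i0 * star (U i1 i0)) := by ring
        _ = 0 := by rw [f12, zero_mul]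
    have hc : c = 0 := by
      rcases mul_eq_zero.mp hc1 with hh | hh <;> exact hh
    rw [hc, zero_mul] at e0
    norm_num at e0
end

section
/- Let φ : M_n(ℂ) → M_m(ℂ) be a linear map and define W_φ = Σ_{i,j=1}^{n} e_{ij} ⊗ φ(e_{ij}) ∈ M_{nm}(ℂ), where e_{ij} are the matrix units of M_n(ℂ) and ⊗ is the Kronecker product. Then φ is a positive map (sends positive semidefinite matrices to positive semidefinite matrices) if and only if W_φ is block-positive, i.e. ⟨x ⊗ y, W_φ (x ⊗ y)⟩ ≥ 0 for all x ∈ ℂ^n and y ∈ ℂ^m. -/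
open Matrix
open scoped ComplexOrder Kronecker ComplexInnerProductSpace

lemma star_quad {m : ℕ} (A : Matrix (Fin m) (Fin m) ℂ) (v : Fin m → ℂ) :
    star (star v ⬝ᵥ (A *ᵥ v)) = star v ⬝ᵥ (Aᴴ *ᵥ v) := by
  simp only [dotProduct, mulVec, conjTranspose_apply, Pi.star_apply, star_sum, star_mul',
    star_star, Finset.mul_sum]
  exact Finset.sum_comm.trans
    (Finset.sum_congr rfl fun i _ => Finset.sum_congr rfl fun j _ => by ring)

lemma qf_sum {p : Type*} [Fintype p] {ι : Type*} (s : Finset ι) (f : ι → Matrix p p ℂ)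
    (u : p → ℂ) :
    star u ⬝ᵥ ((∑ i ∈ s, f i) *ᵥ u) = ∑ i ∈ s, star u ⬝ᵥ (f i *ᵥ u) := by
  simp only [dotProduct, mulVec, Matrix.sum_apply, Finset.sum_mul, Finset.mul_sum]
  exact (Finset.sum_congr rfl fun k _ => Finset.sum_comm).trans Finset.sum_comm

lemma herm_of_nonneg {m : ℕ} (M : Matrix (Fin m) (Fin m) ℂ)
    (h : ∀ v : Fin m → ℂ, 0 ≤ star v ⬝ᵥ (M *ᵥ v)) : M.IsHermitian := by
  have key : ∀ v : EuclideanSpace ℂ (Fin m),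
      ⟪(Matrix.toEuclideanLin (M - Mᴴ)) v, v⟫ = (0 : ℂ) := by
    intro v
    set w : Fin m → ℂ := (WithLp.equiv 2 (Fin m → ℂ)) v with hw
    have hq : star w ⬝ᵥ ((M - Mᴴ) *ᵥ w) = 0 := by
      have hr : star (star w ⬝ᵥ (M *ᵥ w)) = star w ⬝ᵥ (M *ᵥ w) := by
        have h0 := h w
        rw [Complex.nonneg_iff] at h0
        exact Complex.conj_eq_iff_im.mpr h0.2.symm
      rw [sub_mulVec, dotProduct_sub, ← star_quad M w, hr, sub_self]
    have hinner : ⟪v, (Matrix.toEuclideanLin (M - Mᴴ)) v⟫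
        = star w ⬝ᵥ ((M - Mᴴ) *ᵥ w) := by
      simp only [PiLp.inner_apply, RCLike.inner_apply]
      simp [dotProduct, mulVec, hw, toEuclideanLin_apply, mul_comm, mul_sub,
        Finset.sum_sub_distrib]
    rw [← inner_conj_symm, hinner, hq, map_zero]
  have h0 := (inner_map_self_eq_zero (Matrix.toEuclideanLin (M - Mᴴ))).mp key
  have h1 : M - Mᴴ = 0 := by
    rwa [LinearEquiv.map_eq_zero_iff] at h0
  exact (sub_eq_zero.mp h1).symm

lemma kron_quad {n m : ℕ} (B : Matrix (Fin n) (Fin n) ℂ) (A : Matrix (Fin m) (Fin m) ℂ)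
    (x : Fin n → ℂ) (y : Fin m → ℂ) :
    star (fun p : Fin n × Fin m => x p.1 * y p.2) ⬝ᵥ
      ((B ⊗ₖ A).mulVec (fun p : Fin n × Fin m => x p.1 * y p.2))
    = (star x ⬝ᵥ (B *ᵥ x)) * (star y ⬝ᵥ (A *ᵥ y)) := by
  rw [dotProduct, dotProduct, dotProduct, Fintype.sum_mul_sum, Fintype.sum_prod_type]
  refine Finset.sum_congr rfl fun a _ => Finset.sum_congr rfl fun b _ => ?_
  have key : (∑ c, B a c * x c) * (∑ d, A b d * y d)
      = ∑ c, ∑ d, (B a c * A b d) * (x c * y d) := by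
    rw [Fintype.sum_mul_sum]
    exact Finset.sum_congr rfl fun c _ => Finset.sum_congr rfl fun d _ => by ring
  simp only [mulVec, dotProduct, kroneckerMap_apply, Fintype.sum_prod_type, Pi.star_apply,
    star_mul']
  rw [mul_mul_mul_comm, key]

lemma std_quad {n : ℕ} (i j : Fin n) (x : Fin n → ℂ) :
    star x ⬝ᵥ ((single i j (1 : ℂ)) *ᵥ x) = (starRingEnd ℂ) (x i) * x j := by
  simp [mulVec, dotProduct, single, ite_and, Finset.mul_sum]

lemma key_eq {n m : ℕ} (φ : Matrix (Fin n) (Fin n) ℂ →ₗ[ℂ] Matrix (Fin m) (Fin m) ℂ)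
    (x : Fin n → ℂ) (y : Fin m → ℂ) :
    star (fun p : Fin n × Fin m => x p.1 * y p.2) ⬝ᵥ
        ((∑ i : Fin n, ∑ j : Fin n,
            single i j (1 : ℂ) ⊗ₖ φ (single i j 1)).mulVec
          (fun p : Fin n × Fin m => x p.1 * y p.2))
    = star y ⬝ᵥ ((φ (vecMulVec (star x) x)) *ᵥ y) := by
  have hM : vecMulVec (star x) x
      = ∑ i : Fin n, ∑ j : Fin n,
          ((starRingEnd ℂ) (x i) * x j) • single i j (1 : ℂ) := by
    ext a b
    simp [vecMulVec_apply, Matrix.sum_apply, single, ite_and,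
      Finset.sum_ite_eq, Finset.sum_ite_eq']
  rw [hM, map_sum, qf_sum, qf_sum]
  refine Finset.sum_congr rfl fun i _ => ?_
  rw [map_sum, qf_sum, qf_sum]
  refine Finset.sum_congr rfl fun j _ => ?_
  rw [kron_quad, std_quad, LinearMap.map_smul, smul_mulVec, dotProduct_smul, smul_eq_mul, mul_assoc]

/-- Choi's correspondence: a linear map `φ : M_n(ℂ) → M_m(ℂ)` is positive iff its
Choi matrix `W_φ = Σ_{i,j} e_{ij} ⊗ φ(e_{ij})` is block-positive, i.e.
`⟨x ⊗ y, W_φ (x ⊗ y)⟩ ≥ 0` for all `x ∈ ℂ^n`, `y ∈ ℂ^m`. -/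
theorem positive_iff_choi_blockPositive (n m : ℕ)
    (φ : Matrix (Fin n) (Fin n) ℂ →ₗ[ℂ] Matrix (Fin m) (Fin m) ℂ) :
    (∀ X, X.PosSemidef → (φ X).PosSemidef) ↔
    (∀ (x : Fin n → ℂ) (y : Fin m → ℂ),
      0 ≤ star (fun p : Fin n × Fin m => x p.1 * y p.2) ⬝ᵥ
        ((∑ i : Fin n, ∑ j : Fin n,
            single i j (1 : ℂ) ⊗ₖ φ (single i j 1)).mulVec
          (fun p : Fin n × Fin m => x p.1 * y p.2))) := by
  constructor
  · intro hφ x y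
    rw [key_eq]
    have hPSD : (vecMulVec (star x) x).PosSemidef := by
      refine .of_dotProduct_mulVec_nonneg ?_ fun v => ?_
      · ext a b
        simp [vecMulVec_apply, conjTranspose_apply, mul_comm]
      · have heq : star v ⬝ᵥ (vecMulVec (star x) x *ᵥ v)
            = star (x ⬝ᵥ v) * (x ⬝ᵥ v) := by
          simp only [vecMulVec, mulVec, dotProduct, of_apply, Pi.star_apply, star_sum,
            star_mul', Finset.mul_sum, Finset.sum_mul]
          rw [Finset.sum_comm]
          exact Finset.sum_congr rfl fun a _ => Finset.sum_congr rfl fun b _ => by ring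
        rw [heq]
        exact star_mul_self_nonneg _
    exact (hφ _ hPSD).dotProduct_mulVec_nonneg y
  · intro h X hX
    obtain ⟨B, rfl⟩ : ∃ B : Matrix (Fin n) (Fin n) ℂ, X = Bᴴ * B := by
      open scoped MatrixOrder in
      exact ⟨CFC.sqrt X, by
        rw [← star_eq_conjTranspose, (CFC.sqrt_nonneg X).isSelfAdjoint.star_eq,
          CFC.sqrt_mul_sqrt_self X hX.nonneg]⟩
    have hdecomp : Bᴴ * B
        = ∑ k : Fin n, vecMulVec (star (fun i => B k i)) (fun i => B k i) := by
      ext a b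
      simp [Matrix.mul_apply, Matrix.sum_apply, vecMulVec_apply, conjTranspose_apply]
    rw [hdecomp, map_sum]
    have hterm : ∀ k : Fin n,
        (φ (vecMulVec (star (fun i => B k i)) (fun i => B k i))).PosSemidef := by
      intro k
      have hq : ∀ y : Fin m → ℂ,
          0 ≤ star y ⬝ᵥ ((φ (vecMulVec (star (fun i => B k i)) (fun i => B k i))) *ᵥ y) := by
        intro y
        have := h (fun i => B k i) y
        rwa [key_eq] at this
      exact .of_dotProduct_mulVec_nonneg (herm_of_nonneg _ hq) hq
    exact Finset.sum_induction _ _ (fun _ _ hA hB => hA.add hB) Matrix.PosSemidef.zero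
      (fun k _ => hterm k)
end

section
/- Let ρ ∈ M_{nm}(ℂ) be Hermitian (viewed as an operator on ℂ^n ⊗ ℂ^m). Then Tr(W ρ) ≥ 0 for every block-positive matrix W ∈ M_{nm}(ℂ) if and only if ρ belongs to the closed convex cone generated by the set of product states { (x x*) ⊗ (y y*) : x ∈ ℂ^n, y ∈ ℂ^m }. (That is, the cone of block-positive operators and the cone of separable operators are mutually dual cones with respect to the trace pairing.) -/
open Matrix
open scoped ComplexOrder Kronecker

set_option linter.unusedSectionVars false
set_option maxHeartbeats 1000000

namespace BPDual

variable {N : Type*} [Fintype N] [DecidableEq N]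

instance : LocallyConvexSpace ℝ (Matrix N N ℂ) :=
  inferInstanceAs (LocallyConvexSpace ℝ (N → N → ℂ))

lemma trace_mul_vmv (W : Matrix N N ℂ) (v : N → ℂ) :
    (W * vecMulVec v (star v)).trace = star v ⬝ᵥ W.mulVec v := by
  simp only [Matrix.trace, Matrix.diag, Matrix.mul_apply, vecMulVec_apply, dotProduct,
    mulVec, Pi.star_apply, Finset.mul_sum]
  exact Finset.sum_congr rfl fun i _ => Finset.sum_congr rfl fun j _ => by
    simp [RCLike.star_def]; ring

lemma vmv_herm (v : N → ℂ) : (vecMulVec v (star v)).IsHermitian := by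
  ext i j
  simp [conjTranspose_apply, vecMulVec_apply, RCLike.star_def, mul_comm]

lemma kron_vmv (n m : ℕ) (x : Fin n → ℂ) (y : Fin m → ℂ) :
    vecMulVec x (star x) ⊗ₖ vecMulVec y (star y)
      = vecMulVec (fun p : Fin n × Fin m => x p.1 * y p.2)
          (star fun p : Fin n × Fin m => x p.1 * y p.2) := by
  ext ⟨i, j⟩ ⟨k, l⟩
  simp [kroneckerMap_apply, vecMulVec_apply]
  ring

lemma zero_le_coe (r : ℝ) (h : 0 ≤ r) : (0 : ℂ) ≤ (r : ℂ) := by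
  rw [Complex.le_def]
  simp [h]

lemma isClosed_nonneg : IsClosed {z : ℂ | 0 ≤ z} := by
  have : {z : ℂ | 0 ≤ z} = Complex.re ⁻¹' (Set.Ici 0) ∩ Complex.im ⁻¹' {0} := by
    ext z; simp [Complex.le_def, eq_comm]
  rw [this]
  exact (isClosed_Ici.preimage Complex.continuous_re).inter
    (isClosed_singleton.preimage Complex.continuous_im)

lemma rep_lemma (f : Matrix N N ℂ →L[ℝ] ℝ) :
    ∃ A : Matrix N N ℂ, ∀ σ, f σ = (A * σ).trace.re := by
  classical
  refine ⟨Matrix.of fun q p => (f (Matrix.single p q 1) : ℂ)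
    - Complex.I * (f (Complex.I • Matrix.single p q 1) : ℂ), fun σ => ?_⟩
  have hσ : σ = ∑ p : N, ∑ q : N,
      ((σ p q).re • Matrix.single p q 1 + (σ p q).im • (Complex.I • Matrix.single p q 1)) := by
    ext a b
    simp [Matrix.sum_apply, Matrix.single, ite_and, Finset.sum_ite_eq, Finset.sum_ite_eq',
      Complex.real_smul, mul_ite, Finset.sum_add_distrib]
  have hrhs : ((Matrix.of fun q p => (f (Matrix.single p q 1) : ℂ)
      - Complex.I * (f (Complex.I • Matrix.single p q 1) : ℂ)) * σ).trace
      = ∑ q : N, ∑ p : N, ((f (Matrix.single p q 1) : ℂ)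
      - Complex.I * (f (Complex.I • Matrix.single p q 1) : ℂ)) * σ p q := by
    simp only [Matrix.trace, Matrix.diag, Matrix.mul_apply, Matrix.of_apply]
  conv_lhs => rw [hσ]
  rw [map_sum, hrhs]
  simp only [map_sum, map_add, f.map_smul, smul_eq_mul, Complex.re_sum]
  rw [Finset.sum_comm]
  refine Finset.sum_congr rfl fun p _ => Finset.sum_congr rfl fun q _ => ?_
  simp only [Complex.sub_re, Complex.mul_re, Complex.mul_im, Complex.sub_im, Complex.I_re,
    Complex.I_im, Complex.ofReal_re, Complex.ofReal_im]
  ring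

lemma herm_trace (A σ : Matrix N N ℂ) (hσ : σ.IsHermitian) :
    (((2⁻¹ : ℝ) • (A + Aᴴ)) * σ).trace = ((A * σ).trace.re : ℂ) := by
  have h1 : (Aᴴ * σ).trace = star (A * σ).trace := by
    calc (Aᴴ * σ).trace = (Aᴴ * σᴴ).trace := by rw [hσ.eq]
    _ = ((σ * A)ᴴ).trace := by rw [conjTranspose_mul]
    _ = star (σ * A).trace := trace_conjTranspose _
    _ = star (A * σ).trace := by rw [trace_mul_comm]
  rw [Matrix.smul_mul, trace_smul, Matrix.add_mul, trace_add, h1]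
  rw [RCLike.star_def, Complex.add_conj, Complex.real_smul]
  push_cast
  ring

lemma herm_W (A : Matrix N N ℂ) : ((2⁻¹ : ℝ) • (A + Aᴴ)).IsHermitian := by
  unfold Matrix.IsHermitian
  rw [conjTranspose_smul, conjTranspose_add, conjTranspose_conjTranspose]
  norm_num
  rw [add_comm]

end BPDual

open BPDual

section Main

variable (n m : ℕ)

/-- The separable cone generators set. -/
def Sset : Set (Matrix (Fin n × Fin m) (Fin n × Fin m) ℂ) :=
  {σ | ∃ (k : ℕ) (c : Fin k → ℝ) (x : Fin k → Fin n → ℂ) (y : Fin k → Fin m → ℂ),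
        (∀ i, 0 ≤ c i) ∧
        σ = ∑ i, (c i : ℂ) •
          (vecMulVec (x i) (star (x i)) ⊗ₖ vecMulVec (y i) (star (y i)))}

lemma Sset_zero : (0 : Matrix (Fin n × Fin m) (Fin n × Fin m) ℂ) ∈ Sset n m :=
  ⟨0, Fin.elim0, Fin.elim0, Fin.elim0, fun i => i.elim0, by simp⟩

lemma Sset_gen (x : Fin n → ℂ) (y : Fin m → ℂ) :
    vecMulVec x (star x) ⊗ₖ vecMulVec y (star y) ∈ Sset n m :=
  ⟨1, fun _ => 1, fun _ => x, fun _ => y, fun _ => zero_le_one, by simp⟩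

lemma Sset_add {σ₁ σ₂ : Matrix (Fin n × Fin m) (Fin n × Fin m) ℂ}
    (h₁ : σ₁ ∈ Sset n m) (h₂ : σ₂ ∈ Sset n m) : σ₁ + σ₂ ∈ Sset n m := by
  obtain ⟨k₁, c₁, x₁, y₁, hc₁, rfl⟩ := h₁
  obtain ⟨k₂, c₂, x₂, y₂, hc₂, rfl⟩ := h₂
  refine ⟨k₁ + k₂, Fin.append c₁ c₂, Fin.append x₁ x₂, Fin.append y₁ y₂, ?_, ?_⟩
  · intro i
    refine Fin.addCases (fun j => ?_) (fun j => ?_) i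
    · rw [Fin.append_left]; exact hc₁ j
    · rw [Fin.append_right]; exact hc₂ j
  · rw [Fin.sum_univ_add]
    simp [Fin.append_left, Fin.append_right]

lemma Sset_smul {σ : Matrix (Fin n × Fin m) (Fin n × Fin m) ℂ} {t : ℝ} (ht : 0 ≤ t)
    (h : σ ∈ Sset n m) : t • σ ∈ Sset n m := by
  obtain ⟨k, c, x, y, hc, rfl⟩ := h
  refine ⟨k, fun i => t * c i, x, y, fun i => mul_nonneg ht (hc i), ?_⟩
  rw [Finset.smul_sum]
  refine Finset.sum_congr rfl fun i _ => ?_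
  rw [← smul_assoc]
  congr 1
  rw [Complex.real_smul]
  norm_cast

lemma Sset_convex : Convex ℝ (Sset n m) := fun _ hx _ hy a b ha hb _ =>
  Sset_add n m (Sset_smul n m ha hx) (Sset_smul n m hb hy)

end Main

/-- Duality between block-positive operators and separable operators: a Hermitian
`ρ ∈ M_{nm}(ℂ)` satisfies `Tr(W ρ) ≥ 0` for every block-positive `W` iff `ρ` lies in
the closed convex cone generated by the product states `(x x*) ⊗ (y y*)`. -/
theorem blockPositive_dual_separable (n m : ℕ)
    (ρ : Matrix (Fin n × Fin m) (Fin n × Fin m) ℂ) (hρ : ρ.IsHermitian) :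
    (∀ W : Matrix (Fin n × Fin m) (Fin n × Fin m) ℂ, W.IsHermitian →
      (∀ (x : Fin n → ℂ) (y : Fin m → ℂ),
        0 ≤ star (fun p : Fin n × Fin m => x p.1 * y p.2) ⬝ᵥ
          W.mulVec (fun p : Fin n × Fin m => x p.1 * y p.2)) →
      0 ≤ (W * ρ).trace) ↔
    ρ ∈ closure {σ : Matrix (Fin n × Fin m) (Fin n × Fin m) ℂ |
      ∃ (k : ℕ) (c : Fin k → ℝ) (x : Fin k → Fin n → ℂ) (y : Fin k → Fin m → ℂ),
        (∀ i, 0 ≤ c i) ∧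
        σ = ∑ i, (c i : ℂ) •
          (vecMulVec (x i) (star (x i)) ⊗ₖ vecMulVec (y i) (star (y i)))} := by
  have hset : {σ : Matrix (Fin n × Fin m) (Fin n × Fin m) ℂ |
      ∃ (k : ℕ) (c : Fin k → ℝ) (x : Fin k → Fin n → ℂ) (y : Fin k → Fin m → ℂ),
        (∀ i, 0 ≤ c i) ∧
        σ = ∑ i, (c i : ℂ) •
          (vecMulVec (x i) (star (x i)) ⊗ₖ vecMulVec (y i) (star (y i)))} = Sset n m := rfl
  rw [hset]
  constructor
  · -- forward: dual positivity implies membership in the closed cone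
    intro h
    by_contra hK
    obtain ⟨f, u, hfρ, hfS⟩ :=
      geometric_hahn_banach_point_closed ((Sset_convex n m).closure) isClosed_closure hK
    have hu0 : u < 0 := by
      have h0 := hfS 0 (subset_closure (Sset_zero n m))
      simpa using h0
    have hfpos : ∀ b ∈ closure (Sset n m), 0 ≤ f b := by
      intro b hb
      by_contra hneg
      push_neg at hneg
      have htpos : 0 < u / f b := by
        rw [div_pos_iff]; right; exact ⟨hu0, hneg⟩
      have htb : (u / f b) • b ∈ closure (Sset n m) :=
        map_mem_closure (continuous_const_smul _) hb fun s hs => Sset_smul n m htpos.le hs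
      have hlt := hfS _ htb
      rw [f.map_smul, smul_eq_mul, div_mul_cancel₀ u (ne_of_lt hneg)] at hlt
      exact lt_irrefl u hlt
    obtain ⟨A, hA⟩ := rep_lemma f
    have hbp : ∀ (x : Fin n → ℂ) (y : Fin m → ℂ),
        0 ≤ star (fun p : Fin n × Fin m => x p.1 * y p.2) ⬝ᵥ
          ((2⁻¹ : ℝ) • (A + Aᴴ)).mulVec (fun p : Fin n × Fin m => x p.1 * y p.2) := by
      intro x y
      rw [← trace_mul_vmv, ← kron_vmv n m x y,
        herm_trace A _ ((kron_vmv n m x y) ▸ vmv_herm _)]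
      rw [← hA]
      exact zero_le_coe _ (hfpos _ (subset_closure (Sset_gen n m x y)))
    have h0 := h _ (herm_W A) hbp
    rw [herm_trace A ρ hρ, ← hA] at h0
    have : (0:ℝ) ≤ f ρ := by
      rw [Complex.le_def] at h0
      simpa using h0.1
    linarith
  · -- reverse: each block-positive W pairs nonnegatively with the closed cone
    intro h W hW hbp
    have hsub : Sset n m ⊆ {σ : Matrix (Fin n × Fin m) (Fin n × Fin m) ℂ |
        0 ≤ (W * σ).trace} := by
      rintro σ ⟨k, c, x, y, hc, rfl⟩
      show (0:ℂ) ≤ _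
      rw [Matrix.mul_sum, trace_sum]
      refine Finset.sum_nonneg fun i _ => ?_
      rw [mul_smul_comm, trace_smul, kron_vmv n m (x i) (y i), trace_mul_vmv, smul_eq_mul]
      exact mul_nonneg (zero_le_coe _ (hc i)) (hbp (x i) (y i))
    have hc : Continuous fun σ : Matrix (Fin n × Fin m) (Fin n × Fin m) ℂ => (W * σ).trace :=
      Continuous.matrix_trace (continuous_const.matrix_mul continuous_id)
    have hcl : IsClosed {σ : Matrix (Fin n × Fin m) (Fin n × Fin m) ℂ |
        0 ≤ (W * σ).trace} := isClosed_nonneg.preimage hc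
    exact closure_minimal hsub hcl h
end
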